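/- arXiv:2512.07577 — 6 statements merged into one kernel-verified Lean document; each statement's English description precedes it below -/
import Mathlib

section
/- Let δ ≥ e^{−n/16} and 1/m < ε < 1/2. Let (A, w) be a ReLU network with n input nodes and m hidden layer nodes. If (A, w) is (ε, δ)-far from computing the constant 0-function, then there exists an input x ∈ {0,1}^n such that wᵀ·relu(Ax) > (1/8)·ε·m·n. -/
open scoped Classical
open Finset

noncomputable section

/-- The ReLU activation function. -/
def relu (z : ℝ) : ℝ := max z 0

/-- Interpret a Boolean vector as a real 0/1 vector. -/
def bv {n : ℕ} (x : Fin n → Bool) : Fin n → ℝ := fun i => if x i then 1 else 0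

/-- The value at the output node of the ReLU network `(A, w)` on input `x`:
`wᵀ · relu (A x)`. -/
def netVal {m n : ℕ} (A : Matrix (Fin m) (Fin n) ℝ) (w : Fin m → ℝ) (x : Fin n → ℝ) : ℝ :=
  ∑ j, w j * relu (∑ i, A j i * x i)

/-- The Boolean function computed by the ReLU network `(A, w)`. -/
def netBool {m n : ℕ} (A : Matrix (Fin m) (Fin n) ℝ) (w : Fin m → ℝ) (x : Fin n → Bool) : Bool :=
  decide (0 < netVal A w (bv x))

/-- The constant 0-function. -/
def zeroFun {n : ℕ} : (Fin n → Bool) → Bool := fun _ => false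

/-- The OR-function: 1 iff the input is nonzero. -/
def orFun {n : ℕ} : (Fin n → Bool) → Bool := fun x => decide (∃ i, x i = true)

/-- `(A, w)` is `(ε, δ)`-close to computing `f`: one can change at most `ε·n·m` entries of `A`
and `ε·m` entries of `w` (staying in `[-1,1]`) so that the resulting network disagrees with `f`
on at most a `δ`-fraction of the `2^n` inputs. -/
def IsClose {m n : ℕ} (A : Matrix (Fin m) (Fin n) ℝ) (w : Fin m → ℝ) (ε δ : ℝ)
    (f : (Fin n → Bool) → Bool) : Prop :=
  ∃ (A' : Matrix (Fin m) (Fin n) ℝ) (w' : Fin m → ℝ),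
    (∀ j i, |A' j i| ≤ 1) ∧ (∀ j, |w' j| ≤ 1) ∧
    (((Finset.univ.filter (fun p : Fin m × Fin n => A' p.1 p.2 ≠ A p.1 p.2)).card : ℝ)
        ≤ ε * n * m) ∧
    (((Finset.univ.filter (fun j : Fin m => w' j ≠ w j)).card : ℝ) ≤ ε * m) ∧
    (((Finset.univ.filter (fun x : Fin n → Bool => netBool A' w' x ≠ f x)).card : ℝ)
        ≤ δ * 2 ^ n)

/-!
If every output is at most `εmn/8`, the network can be repaired cheaply into one
computing `0`. If at most `εm` output weights are positive, setting them to `0` makes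
every output `≤ 0`. Otherwise pick `s = ⌊εm⌋ ≥ εm/2` hidden nodes with positive output
weight and rewire each of them to `x ↦ -relu (x₁ + ⋯ + xₙ)`. This changes `sn ≤ εmn`
entries of `A` and `s ≤ εm` entries of `w`, and lowers the output at `x` by at least
`s·|x| ≥ εmn/8` whenever `|x| ≥ n/4`. So only inputs of weight `< n/4` can still be
mapped to `1`, and by a Chernoff bound there are at most `e^{-n/16}·2ⁿ` of them.
-/

def weight {ι : Type*} [Fintype ι] (x : ι → Bool) : ℕ := #{i | x i = true}

lemma sum_pow_weight {ι : Type*} [Fintype ι] [DecidableEq ι] (c : ℝ) :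
    ∑ x : ι → Bool, c ^ weight x = (c + 1) ^ Fintype.card ι := by
  have hprod (x : ι → Bool) : c ^ weight x = ∏ i, if x i = true then c else 1 := by
    rw [prod_ite, prod_const, prod_const, one_pow, mul_one, weight]
  simp_rw [hprod]
  rw [← Fintype.prod_sum fun (_ : ι) (b : Bool) => if b = true then c else 1]
  simp

lemma card_weight_lt_le {ι : Type*} [Fintype ι] [DecidableEq ι] {c : ℝ} (hc0 : 0 < c)
    (hc1 : c ≤ 1) (t : ℝ) :
    (#{x : ι → Bool | (weight x : ℝ) < t} : ℝ) ≤ c ^ (-t) * (c + 1) ^ Fintype.card ι := by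
  have hlight {x : ι → Bool} (hx : (weight x : ℝ) < t) : 1 ≤ c ^ weight x * c ^ (-t) := by
    rw [← Real.rpow_natCast, ← Real.rpow_add hc0]
    exact Real.one_le_rpow_of_pos_of_le_one_of_nonpos hc0 hc1 (by linarith)
  calc (#{x : ι → Bool | (weight x : ℝ) < t} : ℝ)
      = ∑ x with (weight x : ℝ) < t, (1 : ℝ) := by simp
    _ ≤ ∑ x with (weight x : ℝ) < t, c ^ weight x * c ^ (-t) :=
        sum_le_sum fun x hx => hlight (mem_filter.mp hx).2
    _ ≤ ∑ x, c ^ weight x * c ^ (-t) :=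
        sum_le_sum_of_subset_of_nonneg (filter_subset _ _) fun _ _ _ => by positivity
    _ = c ^ (-t) * (c + 1) ^ Fintype.card ι := by
        rw [← sum_mul, sum_pow_weight, mul_comm]

lemma three_rpow_quarter_mul_le :
    (3 : ℝ) ^ (1 / 4 : ℝ) * (4 / 3) ≤ 2 * Real.exp (-1 / 16) := by
  have hroot : (3 : ℝ) ^ (1 / 4 : ℝ) ≤ 45 / 32 := by
    have h4 : ((3 : ℝ) ^ (1 / 4 : ℝ)) ^ 4 = 3 := by
      rw [← Real.rpow_natCast, ← Real.rpow_mul (by norm_num)]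
      norm_num
    refine le_of_pow_le_pow_left₀ (n := 4) (by norm_num) (by norm_num) ?_
    rw [h4]
    norm_num
  have hexp : (15 / 16 : ℝ) ≤ Real.exp (-1 / 16) := by
    linarith [Real.add_one_le_exp (-1 / 16)]
  nlinarith

lemma card_weight_lt_quarter_le (n : ℕ) :
    (#{x : Fin n → Bool | (weight x : ℝ) < n / 4} : ℝ)
      ≤ Real.exp (-(n : ℝ) / 16) * 2 ^ n := by
  calc (#{x : Fin n → Bool | (weight x : ℝ) < n / 4} : ℝ)
      ≤ (1 / 3 : ℝ) ^ (-(n / 4 : ℝ)) * (1 / 3 + 1) ^ n := by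
        simpa using
          card_weight_lt_le (ι := Fin n) (by norm_num : (0 : ℝ) < 1 / 3) (by norm_num) (n / 4)
    _ = ((3 : ℝ) ^ (1 / 4 : ℝ) * (4 / 3)) ^ n := by
        rw [mul_pow, ← Real.rpow_natCast ((3 : ℝ) ^ _), ← Real.rpow_mul (by norm_num),
          one_div, Real.inv_rpow (by norm_num), Real.rpow_neg (by norm_num), inv_inv]
        norm_num
        ring_nf
    _ ≤ (2 * Real.exp (-1 / 16)) ^ n := by
        exact pow_le_pow_left₀ (by positivity) three_rpow_quarter_mul_le n
    _ = Real.exp (-(n : ℝ) / 16) * 2 ^ n := by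
        rw [mul_pow, ← Real.exp_nat_mul, mul_comm]
        ring_nf

lemma sum_bv_eq_weight {n : ℕ} (x : Fin n → Bool) : ∑ i, bv x i = weight x := by
  simp [bv, sum_boole, weight]

lemma relu_nonneg (z : ℝ) : 0 ≤ relu z := le_max_right z 0

lemma card_filter_ne_le_card {α β : Type*} [Fintype α] {f g : α → β} (S : Finset α)
    (h : ∀ a ∉ S, f a = g a) : #{a | f a ≠ g a} ≤ #S :=
  card_le_card fun a ha => by_contra fun haS => (mem_filter.mp ha).2 (h a haS)

section Network

variable {m n : ℕ} {A : Matrix (Fin m) (Fin n) ℝ} {w : Fin m → ℝ}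

lemma netVal_nonpos_of_nonpos (hw : ∀ j, w j ≤ 0) (x : Fin n → ℝ) : netVal A w x ≤ 0 :=
  sum_nonpos fun j _ => mul_nonpos_of_nonpos_of_nonneg (hw j) (relu_nonneg _)

lemma netVal_overwrite_le {S : Finset (Fin m)} (hS : ∀ j ∈ S, 0 ≤ w j) {x : Fin n → ℝ}
    (hx : ∀ i, 0 ≤ x i) :
    netVal (fun j i => if j ∈ S then 1 else A j i) (fun j => if j ∈ S then -1 else w j) x
      ≤ netVal A w x - #S * ∑ i, x i := by
  have hterm (j : Fin m) :
      (if j ∈ S then -1 else w j) * relu (∑ i, (if j ∈ S then 1 else A j i) * x i)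
        ≤ w j * relu (∑ i, A j i * x i) - if j ∈ S then ∑ i, x i else 0 := by
    by_cases hj : j ∈ S
    · have hnn := mul_nonneg (hS j hj) (relu_nonneg (∑ i, A j i * x i))
      have hsum : relu (∑ i, x i) = ∑ i, x i := max_eq_left (sum_nonneg fun i _ => hx i)
      simp only [hj, if_true, one_mul, hsum]
      linarith
    · simp [hj]
  calc _ ≤ ∑ j, (w j * relu (∑ i, A j i * x i) - if j ∈ S then ∑ i, x i else 0) :=
        sum_le_sum fun j _ => hterm j
    _ = netVal A w x - #S * ∑ i, x i := by
        rw [sum_sub_distrib, sum_ite_mem, univ_inter, sum_const, nsmul_eq_mul, netVal]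

lemma card_ne_zeroFun_le (s : Finset (Fin n → Bool)) (h : ∀ x ∉ s, netVal A w (bv x) ≤ 0) :
    #{x | netBool A w x ≠ zeroFun x} ≤ #s :=
  card_le_card fun x hx => by_contra fun hxs => by
    simp [netBool, zeroFun, not_lt.mpr (h x hxs)] at hx

lemma isClose_zeroFun_of_card_pos_le {ε δ : ℝ} (hA : ∀ j i, |A j i| ≤ 1)
    (hw : ∀ j, |w j| ≤ 1) (hε : 0 ≤ ε) (hδ : 0 ≤ δ)
    (hpos : (#{j | 0 < w j} : ℝ) ≤ ε * m) :
    IsClose A w ε δ zeroFun := by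
  refine ⟨A, fun j => min (w j) 0, hA, fun j => ?_, ?_, ?_, ?_⟩
  · have hwj := abs_le.mp (hw j)
    exact abs_le.mpr ⟨le_min hwj.1 (by norm_num), (min_le_right _ _).trans zero_le_one⟩
  · simp only [ne_eq, not_true_eq_false, filter_false, card_empty, Nat.cast_zero]
    positivity
  · refine le_trans (Nat.cast_le.mpr (card_filter_ne_le_card _ fun j hj => ?_)) hpos
    exact min_eq_left (not_lt.mp fun h => hj (mem_filter.mpr ⟨mem_univ j, h⟩))
  · have hzero := card_ne_zeroFun_le ∅ fun x _ =>
      netVal_nonpos_of_nonpos (A := A) (fun j => min_le_right (w j) 0) (bv x)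
    rw [card_empty, Nat.le_zero] at hzero
    rw [hzero, Nat.cast_zero]
    positivity

lemma isClose_zeroFun_of_overwrite {ε δ : ℝ} (hA : ∀ j i, |A j i| ≤ 1)
    (hw : ∀ j, |w j| ≤ 1) {S : Finset (Fin m)} (hS : ∀ j ∈ S, 0 ≤ w j)
    (hSε : (#S : ℝ) ≤ ε * m) (hδ : Real.exp (-(n : ℝ) / 16) ≤ δ)
    (hbound : ∀ x, netVal A w (bv x) ≤ #S * n / 4) :
    IsClose A w ε δ zeroFun := by
  refine ⟨fun j i => if j ∈ S then 1 else A j i, fun j => if j ∈ S then -1 else w j,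
    fun j i => ?_, fun j => ?_, ?_, ?_, ?_⟩
  · dsimp only
    split_ifs <;> simp [hA]
  · dsimp only
    split_ifs <;> simp [hw]
  · have hcard := card_filter_ne_le_card (S ×ˢ univ)
      (f := fun p : Fin m × Fin n => if p.1 ∈ S then (1 : ℝ) else A p.1 p.2)
      (g := fun p => A p.1 p.2) fun p hp => if_neg fun h => hp (mem_product.mpr ⟨h, mem_univ _⟩)
    rw [card_product, card_univ, Fintype.card_fin] at hcard
    calc _ ≤ (#S : ℝ) * n := by exact_mod_cast hcard
      _ ≤ ε * m * n := by gcongr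
      _ = ε * n * m := by ring
  · exact le_trans (Nat.cast_le.mpr (card_filter_ne_le_card S fun j hj => if_neg hj)) hSε
  · have hheavy (x : Fin n → Bool) (hx : x ∉ ({x | (weight x : ℝ) < n / 4} : Finset _)) :
        netVal (fun j i => if j ∈ S then 1 else A j i) (fun j => if j ∈ S then -1 else w j)
          (bv x) ≤ 0 := by
      have hx : (n : ℝ) / 4 ≤ weight x := by simpa using hx
      have hbv : ∀ i, 0 ≤ bv x i := fun i => by unfold bv; split_ifs <;> norm_num
      calc _ ≤ netVal A w (bv x) - #S * weight x := by
            simpa only [sum_bv_eq_weight] using netVal_overwrite_le hS hbv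
        _ ≤ #S * n / 4 - #S * (n / 4) := by gcongr; exact hbound x
        _ = 0 := by ring
    calc _ ≤ (#{x : Fin n → Bool | (weight x : ℝ) < n / 4} : ℝ) := by
          exact_mod_cast card_ne_zeroFun_le _ hheavy
      _ ≤ Real.exp (-(n : ℝ) / 16) * 2 ^ n := card_weight_lt_quarter_le n
      _ ≤ δ * 2 ^ n := by gcongr

end Network

theorem far_from_zero_function_large_output_general (n m : ℕ) (ε δ : ℝ)
    (hδ : Real.exp (-(n : ℝ) / 16) ≤ δ) (hε1 : 1 / (m : ℝ) < ε)
    (A : Matrix (Fin m) (Fin n) ℝ) (w : Fin m → ℝ)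
    (hA : ∀ j i, |A j i| ≤ 1) (hw : ∀ j, |w j| ≤ 1)
    (hfar : ¬ IsClose A w ε δ zeroFun) :
    ∃ x : Fin n → Bool, (1 / 8) * ε * m * n < netVal A w (bv x) := by
  by_contra! hsmall
  apply hfar
  have hε : 0 < ε := lt_of_le_of_lt (by positivity) hε1
  rcases le_or_gt (#{j | 0 < w j} : ℝ) (ε * m) with hfew | hmany
  · exact isClose_zeroFun_of_card_pos_le hA hw hε.le ((Real.exp_pos _).le.trans hδ) hfew
  have hm : 0 < (m : ℝ) := by
    rcases m.eq_zero_or_pos with rfl | hm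
    · simp at hmany
    · exact_mod_cast hm
  have hεm : 1 < ε * m := by rwa [div_lt_iff₀ hm] at hε1
  obtain ⟨S, hSpos, hScard⟩ := exists_subset_card_eq (s := {j | 0 < w j}) (n := ⌊ε * m⌋₊)
    (by exact_mod_cast (Nat.floor_le (by positivity)).trans hmany.le)
  refine isClose_zeroFun_of_overwrite hA hw (fun j hj => (mem_filter.mp (hSpos hj)).2.le)
    (by rw [hScard]; exact Nat.floor_le (by positivity)) hδ fun x => ?_
  have hhalf := Nat.div_two_lt_floor hεm.le
  calc netVal A w (bv x) ≤ 1 / 8 * ε * m * n := hsmall x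
    _ ≤ #S * n / 4 := by rw [hScard]; nlinarith [(Nat.cast_nonneg n : (0 : ℝ) ≤ n)]

/-- If `(A, w)` is `(ε, δ)`-far from computing the constant 0-function
(with `δ ≥ e^{-n/16}` and `1/m < ε < 1/2`), then some input has output value
exceeding `(1/8)·ε·m·n`. -/
theorem far_from_zero_function_large_output (n m : ℕ) (ε δ : ℝ)
    (hδ : Real.exp (-(n : ℝ) / 16) ≤ δ) (hε1 : 1 / (m : ℝ) < ε) (hε2 : ε < 1 / 2)
    (A : Matrix (Fin m) (Fin n) ℝ) (w : Fin m → ℝ)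
    (hA : ∀ j i, |A j i| ≤ 1) (hw : ∀ j, |w j| ≤ 1)
    (hfar : ¬ IsClose A w ε δ zeroFun) :
    ∃ x : Fin n → Bool, (1 / 8) * ε * m * n < netVal A w (bv x) :=
  far_from_zero_function_large_output_general n m ε δ hδ hε1 A w hA hw hfar
end
end

section
/- Let 0 < ε < 1/2 and 0 < λ < 1/2. Let w ∈ [−1,1]^m and A ∈ [−1,1]^{m×n}. Let t and s be integers with t ≥ 2048·ln(4/λ)/ε² and s ≥ 2048·ln(4t/λ)/ε². Let T be the sampling matrix of a uniformly random t-element subset of {1,…,m} and S the sampling matrix of an independent uniformly random s-element subset of {1,…,n}. Then for any fixed x ∈ {0,1}^n, the probability (over the random choices of S and T) that |(mn/(st))·wᵀ·relu(T·A·S·x) − wᵀ·relu(Ax)| > (1/16)·ε·n·m is at most λ. -/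
/-!
Write `f j = w j * relu (A j x)`. Since relu is positively homogeneous and 1-Lipschitz, the
sampled network `(m / t) ∑_{j ∈ T} w j * relu ((n / s) A j S x)` is within `ε n m / 32` of
`(m / t) ∑_{j ∈ T} f j` as long as no sampled row mean `(1 / s) A j S x` deviates from
`(1 / n) A j x` by more than `ε / 32`, and `(m / t) ∑_{j ∈ T} f j` is within `ε n m / 32` of
`∑ j f j` unless the hidden-node sample mean deviates by more than `ε n / 32`. For a sample of size
`k` such a deviation has probability at most `2 exp (-ε² k / 2048)` by Hoeffding's inequality for
sampling without replacement, proved through the moment generating function: the elements of a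
uniform `(k + 1)`-subset other than a uniformly chosen one form a uniform `k`-subset of the rest,
so an induction on `k` reduces each step to Hoeffding's lemma for the uniform distribution. The
bounds on `t` and `s` make the hidden-node deviation have probability at most `λ / 2` and each of
the `t` row deviations at most `λ / (2 t)`.
-/

open scoped Classical
open Finset

noncomputable section

/-- The sampling matrix of a subset `Q`: diagonal 0/1 matrix with 1 exactly at indices in `Q`. -/
def samplM {k : ℕ} (Q : Finset (Fin k)) : Matrix (Fin k) (Fin k) ℝ :=
  Matrix.diagonal fun i => if i ∈ Q then 1 else 0

open Real

section

variable {ι : Type*}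

open MeasureTheory ProbabilityTheory in
lemma sum_exp_mul_le_card_mul_exp {U : Finset ι} (hU : U.Nonempty) {c : ι → ℝ}
    {B : ℝ} (hc : ∀ i ∈ U, |c i| ≤ B) (θ : ℝ) :
    ∑ i ∈ U, exp (θ * c i) ≤ #U * exp (θ * ((∑ i ∈ U, c i) / #U) + θ ^ 2 * B ^ 2 / 2) := by
  have : Nonempty U := hU.coe_sort
  let _ : MeasurableSpace U := ⊤
  set μ := (PMF.uniformOfFintype U).toMeasure
  set N : ℝ := (#U : ℝ)
  have hN : 0 < N := by simp [N, hU.card_pos]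
  have hB : 0 ≤ B := (abs_nonneg _).trans (hc _ hU.choose_spec)
  have hμ (g : ι → ℝ) : ∫ i : U, g i ∂μ = (∑ i ∈ U, g i) / N := by
    simp [μ, N, PMF.integral_eq_sum, PMF.uniformOfFintype_apply, div_eq_inv_mul, mul_sum,
      sum_attach U (fun i => (#U : ℝ)⁻¹ * g i)]
  have hoeffding := (hasSubgaussianMGF_of_mem_Icc (X := fun i : U => c i) (μ := μ) (a := -B)
    (b := B) (measurable_of_countable _).aemeasurable
    (ae_of_all _ fun i => abs_le.mp (hc i i.2))).mgf_le θ
  have hnorm : (((‖B - -B‖₊ / 2) ^ 2 : NNReal) : ℝ) = B ^ 2 := by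
    rw [sub_neg_eq_add, ← two_mul]; simp [abs_of_nonneg hB]
  rw [mgf, hμ, hμ (fun i => exp (θ * (c i - (∑ i ∈ U, c i) / N))), hnorm,
    div_le_iff₀ hN] at hoeffding
  calc ∑ i ∈ U, exp (θ * c i)
      = exp (θ * ((∑ i ∈ U, c i) / N)) * ∑ i ∈ U, exp (θ * (c i - (∑ i ∈ U, c i) / N)) := by
        rw [mul_sum]; congr! 1 with i; rw [← exp_add]; ring_nf
    _ ≤ exp (θ * ((∑ i ∈ U, c i) / N)) * (exp (B ^ 2 * θ ^ 2 / 2) * N) := by gcongr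
    _ = N * exp (θ * ((∑ i ∈ U, c i) / N) + θ ^ 2 * B ^ 2 / 2) := by rw [exp_add]; ring_nf

lemma sum_sum_powersetCard_erase_insert {R : Type*} [Semiring R] (U : Finset ι) (t : ℕ)
    (G : Finset ι → R) :
    ∑ j ∈ U, ∑ T ∈ (U.erase j).powersetCard t, G (insert j T) =
      (t + 1) * ∑ T ∈ U.powersetCard (t + 1), G T := by
  calc ∑ j ∈ U, ∑ T ∈ (U.erase j).powersetCard t, G (insert j T)
      = ∑ T ∈ U.powersetCard (t + 1), ∑ _j ∈ T, G T := by
        rw [sum_sigma', sum_sigma']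
        refine sum_nbij' (fun p => ⟨insert p.1 p.2, p.1⟩) (fun p => ⟨p.2, p.1.erase p.2⟩)
          ?_ ?_ ?_ ?_ fun _ _ => rfl
        · rintro ⟨j, T⟩ h
          simp only [mem_sigma, mem_powersetCard, subset_erase] at h ⊢
          refine ⟨⟨insert_subset h.1 h.2.1.1, ?_⟩, mem_insert_self j T⟩
          rw [card_insert_of_notMem h.2.1.2, h.2.2]
        · rintro ⟨T, j⟩ h
          simp only [mem_sigma, mem_powersetCard] at h ⊢
          exact ⟨h.1.1 h.2, (erase_subset_erase j h.1.1), by rw [card_erase_of_mem h.2, h.1.2]; rfl⟩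
        · rintro ⟨j, T⟩ h
          simp only [mem_sigma, mem_powersetCard, subset_erase] at h
          simp [erase_insert h.2.1.2]
        · rintro ⟨T, j⟩ h
          simp [insert_erase (mem_sigma.1 h).2]
    _ = (t + 1) * ∑ T ∈ U.powersetCard (t + 1), G T := by
        rw [mul_sum]
        refine sum_congr rfl fun T hT => ?_
        simp [(mem_powersetCard.1 hT).2]

lemma sum_powersetCard_succ_exp_mul_sum (c : ι → ℝ) (θ : ℝ) (t : ℕ) (U : Finset ι) :
    (t + 1) * ∑ T ∈ U.powersetCard (t + 1), exp (θ * ∑ j ∈ T, c j) =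
      ∑ j ∈ U, exp (θ * c j) * ∑ T ∈ (U.erase j).powersetCard t, exp (θ * ∑ i ∈ T, c i) := by
  rw [← sum_sum_powersetCard_erase_insert]
  refine sum_congr rfl fun j _ => ?_
  rw [mul_sum]
  refine sum_congr rfl fun T hT => ?_
  rw [sum_insert fun h => notMem_erase j U ((mem_powersetCard.1 hT).1 h), mul_add, exp_add]

lemma sum_exp_mul_choose_mul_exp_le {U : Finset ι} {c : ι → ℝ} {B : ℝ}
    (hc : ∀ i ∈ U, |c i| ≤ B) (θ : ℝ) {t : ℕ} (hU : t + 1 < #U) :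
    ∑ j ∈ U, exp (θ * c j) * ((#U - 1).choose t *
        exp (t * (θ * ((∑ i ∈ U, c i - c j) / (#U - 1)) + θ ^ 2 * B ^ 2 / 2))) ≤
      (t + 1) * ((#U).choose (t + 1) *
        exp ((t + 1) * (θ * ((∑ i ∈ U, c i) / #U) + θ ^ 2 * B ^ 2 / 2))) := by
  set M : ℝ := (#U : ℝ)
  set S := ∑ i ∈ U, c i
  set Q := θ ^ 2 * B ^ 2 / 2
  have hM : (t : ℝ) + 1 < M := by simp only [M]; exact_mod_cast hU
  -- after the induction hypothesis a summand depends on `j` only through `exp (θ * α * c j)`,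
  -- so Hoeffding's lemma is applied at `θ * α`; `α ^ 2 ≤ 1` keeps its variance term below `Q`
  set α : ℝ := 1 - t / (M - 1)
  have hα : α ^ 2 ≤ 1 := by
    have : (t : ℝ) / (M - 1) ≤ 1 := div_le_one_of_le₀ (by linarith) (by linarith)
    have : 0 ≤ (t : ℝ) / (M - 1) := div_nonneg (by positivity) (by linarith)
    nlinarith
  have hchoose : M * (#U - 1).choose t = (t + 1) * (#U).choose (t + 1) := by
    have h := Nat.add_one_mul_choose_eq (#U - 1) t
    rw [Nat.sub_add_cancel (by omega), mul_comm _ (t + 1)] at h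
    simp only [M]
    exact_mod_cast h
  have hM1 : M - 1 ≠ 0 := by linarith
  have hexp : t * (θ * (S / (M - 1)) + Q) + (θ * α * (S / M) + Q) =
      (t + 1) * (θ * (S / M) + Q) := by
    have : M ≠ 0 := by linarith
    simp only [α]
    field_simp
    ring
  set C := (#U - 1).choose t * exp (t * (θ * (S / (M - 1)) + Q))
  calc ∑ j ∈ U, exp (θ * c j) * ((#U - 1).choose t * exp (t * (θ * ((S - c j) / (M - 1)) + Q)))
      = C * ∑ j ∈ U, exp (θ * α * c j) := by
        rw [mul_sum]
        refine sum_congr rfl fun j _ => ?_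
        have hj : θ * c j + t * (θ * ((S - c j) / (M - 1)) + Q) =
            t * (θ * (S / (M - 1)) + Q) + θ * α * c j := by
          simp only [α]
          field_simp
          ring
        rw [mul_left_comm, ← exp_add, hj, exp_add]
        ring
    _ ≤ C * (M * exp (θ * α * (S / M) + (θ * α) ^ 2 * B ^ 2 / 2)) := by
        gcongr
        exact sum_exp_mul_le_card_mul_exp (card_pos.1 (by omega)) hc _
    _ ≤ C * (M * exp (θ * α * (S / M) + Q)) := by
        gcongr
        calc (θ * α) ^ 2 * B ^ 2 / 2 = α ^ 2 * Q := by ring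
          _ ≤ Q := mul_le_of_le_one_left (by positivity) hα
    _ = (t + 1) * ((#U).choose (t + 1) * exp ((t + 1) * (θ * (S / M) + Q))) := by
        rw [← hexp, ← mul_assoc ((t : ℝ) + 1), ← hchoose, exp_add (t * _)]
        ring

lemma sum_powersetCard_exp_mul_sum_le {c : ι → ℝ} {B : ℝ} (θ : ℝ) (t : ℕ) (U : Finset ι)
    (hc : ∀ i ∈ U, |c i| ≤ B) :
    ∑ T ∈ U.powersetCard t, exp (θ * ∑ j ∈ T, c j) ≤
      (#U).choose t * exp (t * (θ * ((∑ j ∈ U, c j) / #U) + θ ^ 2 * B ^ 2 / 2)) := by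
  induction t generalizing U with
  | zero => simp
  | succ t ih =>
    rcases lt_trichotomy #U (t + 1) with hlt | heq | hgt
    · simp [powersetCard_eq_empty.2 hlt, Nat.choose_eq_zero_of_lt hlt]
    · have hU : (#U : ℝ) ≠ 0 := by simp only [heq]; positivity
      rw [← heq, powersetCard_self, sum_singleton, Nat.choose_self, Nat.cast_one, one_mul,
        exp_le_exp, mul_add, mul_left_comm, mul_div_cancel₀ _ hU, le_add_iff_nonneg_right]
      positivity
    refine le_of_mul_le_mul_left ?_ (by positivity : (0 : ℝ) < t + 1)
    calc ((t : ℝ) + 1) * ∑ T ∈ U.powersetCard (t + 1), exp (θ * ∑ j ∈ T, c j)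
        = ∑ j ∈ U, exp (θ * c j) * ∑ T ∈ (U.erase j).powersetCard t, exp (θ * ∑ i ∈ T, c i) :=
          sum_powersetCard_succ_exp_mul_sum c θ t U
      _ ≤ ∑ j ∈ U, exp (θ * c j) * ((#U - 1).choose t *
            exp (t * (θ * ((∑ i ∈ U, c i - c j) / (#U - 1)) + θ ^ 2 * B ^ 2 / 2))) := by
          gcongr with j hj
          have hih := ih (U.erase j) fun i hi => hc i (mem_of_mem_erase hi)
          rwa [card_erase_of_mem hj, sum_erase_eq_sub hj, Nat.cast_sub (card_pos.2 ⟨j, hj⟩),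
            Nat.cast_one] at hih
      _ ≤ _ := by
          push_cast
          exact sum_exp_mul_choose_mul_exp_le hc θ hgt

lemma card_filter_lt_sum_le {c : ι → ℝ} {B : ℝ} (hB : 0 < B) {U : Finset ι}
    (hc : ∀ i ∈ U, |c i| ≤ B) {t : ℕ} (ht : 0 < t) {δ : ℝ} (hδ : 0 ≤ δ) :
    (#{T ∈ U.powersetCard t | t * ((∑ j ∈ U, c j) / #U) + δ < ∑ j ∈ T, c j} : ℝ) ≤
      exp (-δ ^ 2 / (2 * t * B ^ 2)) * (#U).choose t := by
  set a := t * ((∑ j ∈ U, c j) / #U) + δ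
  set θ := δ / (t * B ^ 2)
  have hθ : 0 ≤ θ := by positivity
  calc (#{T ∈ U.powersetCard t | a < ∑ j ∈ T, c j} : ℝ)
      ≤ ∑ T ∈ U.powersetCard t, exp (θ * (∑ j ∈ T, c j - a)) := by
        rw [card_eq_sum_ones, Nat.cast_sum, sum_filter]
        gcongr with T
        split_ifs with h
        · exact_mod_cast one_le_exp (mul_nonneg hθ (by linarith))
        · positivity
    _ = exp (-(θ * a)) * ∑ T ∈ U.powersetCard t, exp (θ * ∑ j ∈ T, c j) := by
        rw [mul_sum]
        congr! 1 with T
        rw [← exp_add]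
        ring_nf
    _ ≤ exp (-(θ * a)) *
          ((#U).choose t * exp (t * (θ * ((∑ j ∈ U, c j) / #U) + θ ^ 2 * B ^ 2 / 2))) := by
        gcongr
        exact sum_powersetCard_exp_mul_sum_le θ t U hc
    _ = exp (-δ ^ 2 / (2 * t * B ^ 2)) * (#U).choose t := by
        rw [mul_left_comm, ← exp_add, mul_comm]
        congr 2
        simp only [a, θ]
        field_simp
        ring

lemma card_filter_lt_abs_sum_sub_le {c : ι → ℝ} {B : ℝ} (hB : 0 < B)
    {U : Finset ι} (hc : ∀ i ∈ U, |c i| ≤ B) {t : ℕ} (ht : 0 < t) {δ : ℝ} (hδ : 0 ≤ δ) :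
    (#{T ∈ U.powersetCard t | δ < |∑ j ∈ T, c j - t * ((∑ j ∈ U, c j) / #U)|} : ℝ) ≤
      2 * exp (-δ ^ 2 / (2 * t * B ^ 2)) * (#U).choose t := by
  have hupper := card_filter_lt_sum_le hB hc ht hδ
  have hlower := card_filter_lt_sum_le (c := fun i => -c i) hB (by simpa using hc) ht hδ
  simp only [sum_neg_distrib] at hlower
  set upper := {T ∈ U.powersetCard t | t * ((∑ j ∈ U, c j) / #U) + δ < ∑ j ∈ T, c j}
  set lower := {T ∈ U.powersetCard t | t * ((-∑ j ∈ U, c j) / #U) + δ < -∑ j ∈ T, c j}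
  have hsub : {T ∈ U.powersetCard t | δ < |∑ j ∈ T, c j - t * ((∑ j ∈ U, c j) / #U)|} ⊆
      upper ∪ lower := by
    rw [← filter_or]
    refine monotone_filter_right _ fun T _ h => ?_
    rcases lt_abs.1 h with h | h
    · left; linarith
    · right; rw [neg_div, mul_neg]; linarith
  calc (#{T ∈ U.powersetCard t | δ < |∑ j ∈ T, c j - t * ((∑ j ∈ U, c j) / #U)|} : ℝ)
      ≤ #(upper ∪ lower) := by exact_mod_cast card_le_card hsub
    _ ≤ #upper + #lower := by exact_mod_cast card_union_le _ _
    _ ≤ 2 * exp (-δ ^ 2 / (2 * t * B ^ 2)) * (#U).choose t := by linarith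

lemma card_filter_lt_abs_sum_sub_le_of_log_le {c : ι → ℝ} {B : ℝ} (hB : 0 < B)
    {U : Finset ι} (hc : ∀ i ∈ U, |c i| ≤ B) {ε K lam : ℝ} (hε : 0 < ε) (hK : 0 < K)
    (hlam : 0 < lam) {t : ℕ} (ht : 0 < t) (htK : 2048 * log (4 * K / lam) / ε ^ 2 ≤ t) :
    (#{T ∈ U.powersetCard t | ε * B * t / 32 < |∑ j ∈ T, c j - t * ((∑ j ∈ U, c j) / #U)|} : ℝ)
      ≤ lam / (2 * K) * #(U.powersetCard t) := by
  refine (card_filter_lt_abs_sum_sub_le hB hc ht (by positivity)).trans ?_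
  rw [card_powersetCard]
  refine mul_le_mul_of_nonneg_right ?_ (Nat.cast_nonneg _)
  have hexp : -(ε * B * t / 32) ^ 2 / (2 * t * B ^ 2) = -(ε ^ 2 * t / 2048) := by
    field_simp
    ring
  have hlog : log (4 * K / lam) ≤ ε ^ 2 * t / 2048 := by
    rw [div_le_iff₀ (by positivity)] at htK
    linarith
  calc 2 * exp (-(ε * B * t / 32) ^ 2 / (2 * t * B ^ 2))
      ≤ 2 * exp (-log (4 * K / lam)) := by rw [hexp]; gcongr
    _ = lam / (2 * K) := by
        rw [exp_neg, exp_log (by positivity)]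
        field_simp
        ring

lemma pos_of_mul_log_div_sq_le {ε K lam : ℝ} (hε : 0 < ε) (hlam : 0 < lam) (hK : lam < K)
    {t : ℕ} (ht : 2048 * log (K / lam) / ε ^ 2 ≤ t) : 0 < t := by
  have : 0 < log (K / lam) := log_pos ((one_lt_div hlam).2 hK)
  exact_mod_cast (by positivity : (0 : ℝ) < 2048 * log (K / lam) / ε ^ 2).trans_le ht

lemma card_filter_exists_mem_le {α β : Type*} {T : Finset α} {Y : Finset β}
    {R : α → β → Prop} [∀ j, DecidablePred (R j)] [DecidablePred fun y => ∃ j ∈ T, R j y]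
    {q : ℝ} (hR : ∀ j ∈ T, (#{y ∈ Y | R j y} : ℝ) ≤ q * #Y) :
    (#{y ∈ Y | ∃ j ∈ T, R j y} : ℝ) ≤ #T * q * #Y := by
  have hsub : {y ∈ Y | ∃ j ∈ T, R j y} ⊆ T.biUnion fun j => {y ∈ Y | R j y} := by
    intro y hy
    obtain ⟨hyY, j, hj, hR⟩ := mem_filter.1 hy
    exact mem_biUnion.2 ⟨j, hj, mem_filter.2 ⟨hyY, hR⟩⟩
  calc (#{y ∈ Y | ∃ j ∈ T, R j y} : ℝ)
      ≤ ∑ j ∈ T, (#{y ∈ Y | R j y} : ℝ) := by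
        exact_mod_cast (card_le_card hsub).trans card_biUnion_le
    _ ≤ ∑ _j ∈ T, q * #Y := sum_le_sum hR
    _ = #T * q * #Y := by rw [sum_const, nsmul_eq_mul, mul_assoc]

lemma card_filter_product_or_le {α β : Type*} {X : Finset α} {Y : Finset β} {P : α → Prop}
    [DecidablePred P] {Q : α → β → Prop} [∀ a, DecidablePred (Q a)] {p q : ℝ}
    (hP : (#{a ∈ X | P a} : ℝ) ≤ p * #X) (hQ : ∀ a ∈ X, (#{b ∈ Y | Q a b} : ℝ) ≤ q * #Y) :
    (#{ab ∈ X ×ˢ Y | P ab.1 ∨ Q ab.1 ab.2} : ℝ) ≤ (p + q) * #(X ×ˢ Y) := by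
  have hfst : #{ab ∈ X ×ˢ Y | P ab.1} = #{a ∈ X | P a} * #Y := by
    rw [filter_product_left P, card_product]
  have hsnd : (#{ab ∈ X ×ˢ Y | Q ab.1 ab.2} : ℝ) ≤ #X * (q * #Y) := by
    rw [card_filter, sum_product, Nat.cast_sum]
    calc ∑ a ∈ X, ((∑ b ∈ Y, if Q a b then 1 else 0 : ℕ) : ℝ)
        ≤ ∑ _a ∈ X, q * #Y := sum_le_sum fun a ha => by rw [← card_filter]; exact hQ a ha
      _ = #X * (q * #Y) := by rw [sum_const, nsmul_eq_mul]
  calc (#{ab ∈ X ×ˢ Y | P ab.1 ∨ Q ab.1 ab.2} : ℝ)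
      ≤ #{ab ∈ X ×ˢ Y | P ab.1} + #{ab ∈ X ×ˢ Y | Q ab.1 ab.2} := by
        rw [filter_or]; exact_mod_cast card_union_le _ _
    _ ≤ p * #X * #Y + #X * (q * #Y) := by
        rw [hfst, Nat.cast_mul]; gcongr
    _ = (p + q) * #(X ×ˢ Y) := by rw [card_product, Nat.cast_mul]; ring

lemma relu_mul_of_nonneg {k : ℝ} (hk : 0 ≤ k) (z : ℝ) : relu (k * z) = k * relu z := by
  rw [relu, relu, mul_max_of_nonneg _ _ hk, mul_zero]

lemma abs_relu_le (z : ℝ) : |relu z| ≤ |z| := by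
  rw [relu, abs_of_nonneg (le_max_right z 0)]
  exact max_le (le_abs_self z) (abs_nonneg z)

lemma abs_relu_sub_relu_le (y z : ℝ) : |relu y - relu z| ≤ |y - z| :=
  abs_max_sub_max_le_abs y z 0

lemma abs_bv_le {n : ℕ} (x : Fin n → Bool) (i : Fin n) : |bv x i| ≤ 1 := by
  unfold bv; split <;> norm_num

lemma abs_mul_relu_sum_le (U : Finset ι) {a : ℝ} (ha : |a| ≤ 1) {r : ι → ℝ}
    (hr : ∀ i ∈ U, |r i| ≤ 1) : |a * relu (∑ i ∈ U, r i)| ≤ #U := by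
  rw [abs_mul]
  calc |a| * |relu (∑ i ∈ U, r i)| ≤ 1 * |∑ i ∈ U, r i| := by
        exact mul_le_mul ha (abs_relu_le _) (abs_nonneg _) zero_le_one
    _ ≤ ∑ i ∈ U, |r i| := by rw [one_mul]; exact abs_sum_le_sum_abs _ _
    _ ≤ ∑ _i ∈ U, 1 := sum_le_sum hr
    _ = #U := by simp

lemma netVal_samplM_mul_mul {m n : ℕ} (A : Matrix (Fin m) (Fin n) ℝ) (w : Fin m → ℝ)
    (T : Finset (Fin m)) (S : Finset (Fin n)) (x : Fin n → ℝ) :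
    netVal (samplM T * A * samplM S) w x = ∑ j ∈ T, w j * relu (∑ i ∈ S, A j i * x i) := by
  simp only [netVal, samplM, Matrix.mul_diagonal, Matrix.diagonal_mul, ite_mul, one_mul,
    zero_mul, mul_ite, mul_one, mul_zero, ← sum_filter, filter_mem_eq_inter, univ_inter]
  rw [← sum_subset (subset_univ T) fun j _ hj => by simp [hj, relu]]
  exact sum_congr rfl fun j hj => by simp [hj]

lemma abs_div_mul_sum_sub_sum_le {U T : Finset ι} {f g : ι → ℝ} {t : ℕ}
    (hT : #T = t) (ht : t ≠ 0) {δ η : ℝ} (hf : |∑ j ∈ T, f j - t * ((∑ j ∈ U, f j) / #U)| ≤ δ)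
    (hg : ∀ j ∈ T, |g j - f j| ≤ η) :
    |#U / t * ∑ j ∈ T, g j - ∑ j ∈ U, f j| ≤ #U / t * δ + #U * η := by
  rcases eq_or_ne #U 0 with hU | hU
  · simp [card_eq_zero.1 hU]
  have hsplit : #U / t * ∑ j ∈ T, g j - ∑ j ∈ U, f j =
      #U / t * ∑ j ∈ T, (g j - f j) + #U / t * (∑ j ∈ T, f j - t * ((∑ j ∈ U, f j) / #U)) := by
    rw [sum_sub_distrib]
    field_simp
    ring
  have hsum : |∑ j ∈ T, (g j - f j)| ≤ t * η := by
    calc |∑ j ∈ T, (g j - f j)| ≤ ∑ j ∈ T, |g j - f j| := abs_sum_le_sum_abs _ _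
      _ ≤ ∑ _j ∈ T, η := sum_le_sum hg
      _ = t * η := by rw [sum_const, hT, nsmul_eq_mul]
  rw [hsplit]
  refine (abs_add_le _ _).trans ?_
  rw [abs_mul, abs_mul, abs_of_nonneg (by positivity : (0 : ℝ) ≤ #U / t)]
  calc #U / t * |∑ j ∈ T, (g j - f j)| + #U / t * |∑ j ∈ T, f j - t * ((∑ j ∈ U, f j) / #U)|
      ≤ #U / t * (t * η) + #U / t * δ := by gcongr
    _ = #U / t * δ + #U * η := by field_simp; ring

lemma abs_scaled_netVal_samplM_sub_le {m n : ℕ} (A : Matrix (Fin m) (Fin n) ℝ) {w : Fin m → ℝ}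
    (hw : ∀ j, |w j| ≤ 1) (x : Fin n → ℝ) {T : Finset (Fin m)} {S : Finset (Fin n)} {t s : ℕ}
    (hT : #T = t) (ht : t ≠ 0) (hn : n ≠ 0) (hs : s ≠ 0) {δ₁ δ₂ : ℝ}
    (h₁ : |∑ j ∈ T, w j * relu (∑ i, A j i * x i) -
      t * ((∑ j, w j * relu (∑ i, A j i * x i)) / m)| ≤ δ₁)
    (h₂ : ∀ j ∈ T, |∑ i ∈ S, A j i * x i - s * ((∑ i, A j i * x i) / n)| ≤ δ₂) :
    |m * n / (s * t) * netVal (samplM T * A * samplM S) w x - netVal A w x| ≤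
      m / t * δ₁ + m * (n / s * δ₂) := by
  have hrow (j : Fin m) (hj : j ∈ T) :
      |w j * (n / s * relu (∑ i ∈ S, A j i * x i)) - w j * relu (∑ i, A j i * x i)| ≤
        n / s * δ₂ := by
    rw [← mul_sub, abs_mul, ← relu_mul_of_nonneg (by positivity)]
    calc |w j| * |relu (n / s * ∑ i ∈ S, A j i * x i) - relu (∑ i, A j i * x i)|
        ≤ 1 * |n / s * ∑ i ∈ S, A j i * x i - ∑ i, A j i * x i| :=
          mul_le_mul (hw j) (abs_relu_sub_relu_le _ _) (abs_nonneg _) zero_le_one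
      _ = |n / s * (∑ i ∈ S, A j i * x i - s * ((∑ i, A j i * x i) / n))| := by
          rw [one_mul]
          congr 1
          field_simp
      _ = n / s * |∑ i ∈ S, A j i * x i - s * ((∑ i, A j i * x i) / n)| := by
          rw [abs_mul, abs_of_nonneg (by positivity)]
      _ ≤ n / s * δ₂ := by gcongr; exact h₂ j hj
  have hest := abs_div_mul_sum_sub_sum_le (U := univ) hT ht (by simpa using h₁) hrow
  rw [card_univ, Fintype.card_fin] at hest
  rw [netVal_samplM_mul_mul, netVal]
  convert hest using 3
  rw [mul_sum, mul_sum]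
  refine sum_congr rfl fun j _ => ?_
  field_simp

end

theorem sampling_concentration_general (n m : ℕ) (ε lam : ℝ)
    (hε1 : 0 < ε) (hl1 : 0 < lam) (hl2 : lam < 1 / 2)
    (w : Fin m → ℝ) (A : Matrix (Fin m) (Fin n) ℝ)
    (hw : ∀ j, |w j| ≤ 1) (hA : ∀ j i, |A j i| ≤ 1)
    (t s : ℕ)
    (ht : 2048 * Real.log (4 / lam) / ε ^ 2 ≤ t)
    (hs : 2048 * Real.log (4 * t / lam) / ε ^ 2 ≤ s)
    (x : Fin n → Bool) :
    let Ω : Finset (Finset (Fin m) × Finset (Fin n)) :=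
      ((Finset.univ : Finset (Fin m)).powersetCard t) ×ˢ
        ((Finset.univ : Finset (Fin n)).powersetCard s)
    ((Ω.filter (fun TS : Finset (Fin m) × Finset (Fin n) =>
        (1 / 16) * ε * n * m <
          |((m : ℝ) * n / ((s : ℝ) * t)) * netVal (samplM TS.1 * A * samplM TS.2) w (bv x)
            - netVal A w (bv x)|)).card : ℝ)
      ≤ lam * (Ω.card : ℝ) := by
  intro Ω
  have ht0 := pos_of_mul_log_div_sq_le hε1 hl1 (by linarith) ht
  have hs0 := pos_of_mul_log_div_sq_le hε1 hl1 (by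
    have : (1 : ℝ) ≤ t := by exact_mod_cast ht0
    linarith) hs
  rcases lt_or_ge n s with hns | hsn
  · simp [Ω, powersetCard_eq_empty.2 (show #(univ : Finset (Fin n)) < s by simpa using hns)]
  have hn : (0 : ℝ) < n := by exact_mod_cast hs0.trans_le hsn
  have hr (j : Fin m) (i : Fin n) : |A j i * bv x i| ≤ 1 := by
    simpa [abs_mul] using mul_le_one₀ (hA j i) (abs_nonneg _) (abs_bv_le x i)
  have hsample := card_filter_lt_abs_sum_sub_le_of_log_le (U := univ) (K := 1)
    (c := fun j => w j * relu (∑ i, A j i * bv x i)) hn (fun j _ => by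
      simpa only [card_univ, Fintype.card_fin] using
        abs_mul_relu_sum_le univ (hw j) fun i _ => hr j i)
    hε1 one_pos hl1 ht0 (by rwa [mul_one])
  have hrows (j : Fin m) := card_filter_lt_abs_sum_sub_le_of_log_le (U := univ) (B := 1) (K := t)
    one_pos (fun i _ => hr j i) hε1 (by positivity) hl1 hs0 hs
  rw [card_univ, Fintype.card_fin] at hsample hrows
  calc _ ≤ (#{TS ∈ Ω | ε * n * t / 32 < |∑ j ∈ TS.1, w j * relu (∑ i, A j i * bv x i) -
          t * ((∑ j, w j * relu (∑ i, A j i * bv x i)) / m)| ∨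
          ∃ j ∈ TS.1, ε * 1 * s / 32 <
            |∑ i ∈ TS.2, A j i * bv x i - s * ((∑ i, A j i * bv x i) / n)|} : ℝ) := by
        refine Nat.cast_le.2 (card_le_card (monotone_filter_right _ fun TS hTS hbad => ?_))
        by_contra! hgood
        have hT := (mem_powersetCard.1 (mem_product.1 hTS).1).2
        refine hbad.not_ge ((abs_scaled_netVal_samplM_sub_le A hw _ hT
          ht0.ne' (by omega) hs0.ne' hgood.1 hgood.2).trans_eq ?_)
        field_simp
        ring
    _ ≤ (lam / (2 * 1) + lam / 2) * #Ω := by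
        have hunion := card_filter_product_or_le (q := lam / 2) hsample fun T hT => by
          refine (card_filter_exists_mem_le (T := T) (R := fun j S =>
            ε * 1 * s / 32 < |∑ i ∈ S, A j i * bv x i - s * ((∑ i, A j i * bv x i) / n)|)
            fun j _ => hrows j).trans_eq ?_
          rw [(mem_powersetCard.1 hT).2]
          field_simp
        exact hunion
    _ = lam * #Ω := by ring

/-- Random-sampling concentration. For a uniformly random `t`-subset `T` of the
hidden nodes and an independent uniformly random `s`-subset `S` of the input nodes, for any
fixed `x`, the scaled sampled output `(mn/(st))·wᵀ·relu(TASx)` differs from `wᵀ·relu(Ax)` by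
more than `(1/16)·ε·n·m` with probability at most `λ`. -/
theorem sampling_concentration (n m : ℕ) (ε lam : ℝ)
    (hε1 : 0 < ε) (hε2 : ε < 1 / 2) (hl1 : 0 < lam) (hl2 : lam < 1 / 2)
    (w : Fin m → ℝ) (A : Matrix (Fin m) (Fin n) ℝ)
    (hw : ∀ j, |w j| ≤ 1) (hA : ∀ j i, |A j i| ≤ 1)
    (t s : ℕ)
    (ht : 2048 * Real.log (4 / lam) / ε ^ 2 ≤ t)
    (hs : 2048 * Real.log (4 * t / lam) / ε ^ 2 ≤ s)
    (x : Fin n → Bool) :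
    let Ω : Finset (Finset (Fin m) × Finset (Fin n)) :=
      ((Finset.univ : Finset (Fin m)).powersetCard t) ×ˢ
        ((Finset.univ : Finset (Fin n)).powersetCard s)
    ((Ω.filter (fun TS : Finset (Fin m) × Finset (Fin n) =>
        (1 / 16) * ε * n * m <
          |((m : ℝ) * n / ((s : ℝ) * t)) * netVal (samplM TS.1 * A * samplM TS.2) w (bv x)
            - netVal A w (bv x)|)).card : ℝ)
      ≤ lam * (Ω.card : ℝ) :=
  sampling_concentration_general n m ε lam hε1 hl1 hl2 w A hw hA t s ht hs x
end
end

section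
/- Let 0 < ε < 1/1000 with √ε·n an integer, and let (A_L, w_L) be the ReLU network with n input nodes and n hidden layer nodes defined as follows: with I_1 = {1,…,10√ε·n}, I_2 = {10√ε·n + 1,…,30√ε·n}, H_1 = {1,…,10√ε·n}, H_2 = {10√ε·n + 1,…,30√ε·n}, set A_L[j,i] = 1 if (i ∈ I_1 and j ∈ H_1) or (i ∈ I_2 and j ∈ H_2) and A_L[j,i] = 0 otherwise, and set (w_L)_j = 1 for j ∈ H_1, (w_L)_j = −1 for j ∈ H_2, and (w_L)_j = 0 otherwise. Then the probability that a vector x chosen uniformly at random from {0,1}^n satisfies w_Lᵀ·relu(A_L x) > 0 is at most e^{−10√ε·n/8}. -/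
open scoped Classical
open Finset

noncomputable section

/-!
On the hard instance the output is `10k·s₁ - 20k·s₂`, where `s₁ ≤ 10k` and `s₂` count the ones of
`x` in the first and second input blocks, so a positive output forces `s₂ ≤ 5k`: at most a quarter
of the `20k` coordinates of the second block are set. Weighting each such `x` by `(1/3)^s₂`
(an exponential moment) bounds their number by `3^{5k} (4/3)^{20k} 2^{n-20k}`, which is at most
`e^{-10k/8} 2^n`.
-/

section BoolCube

variable {ι : Type*} [Fintype ι] [DecidableEq ι]

theorem sum_pow_card_filter_true {R : Type*} [CommSemiring R] (s : Finset ι) (c : R) :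
    ∑ x : ι → Bool, c ^ #{i ∈ s | x i} = (1 + c) ^ #s * 2 ^ (Fintype.card ι - #s) := by
  let g (i : ι) (b : Bool) : R := if i ∈ s then (if b then c else 1) else 1
  calc ∑ x : ι → Bool, c ^ #{i ∈ s | x i}
      = ∑ x : ι → Bool, ∏ i, g i (x i) := by
        congr with x
        rw [prod_ite_mem, univ_inter, ← prod_filter, prod_const]
    _ = ∏ i, ∑ b, g i b := (Fintype.prod_sum g).symm
    _ = ∏ i, if i ∈ s then 1 + c else 2 := by
        congr with i
        by_cases hi : i ∈ s <;> simp [g, hi, add_comm, one_add_one_eq_two]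
    _ = (1 + c) ^ #s * 2 ^ (Fintype.card ι - #s) := by
        rw [prod_ite, prod_const, prod_const, filter_mem_eq_inter, univ_inter, filter_not,
          filter_mem_eq_inter, univ_inter, card_sdiff_of_subset (subset_univ s), card_univ]

theorem pow_mul_card_filter_le {R : Type*} [CommSemiring R] [PartialOrder R] [IsOrderedRing R]
    (s : Finset ι) {c : R} (hc₀ : 0 ≤ c) (hc₁ : c ≤ 1) (a : ℕ) :
    c ^ a * #{x : ι → Bool | #{i ∈ s | x i} ≤ a} ≤ (1 + c) ^ #s * 2 ^ (Fintype.card ι - #s) := by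
  rw [← sum_pow_card_filter_true, mul_comm, ← nsmul_eq_mul, ← sum_const]
  calc ∑ _x ∈ {x : ι → Bool | #{i ∈ s | x i} ≤ a}, c ^ a
      ≤ ∑ x ∈ {x : ι → Bool | #{i ∈ s | x i} ≤ a}, c ^ #{i ∈ s | x i} :=
        sum_le_sum fun x hx => pow_le_pow_of_le_one hc₀ hc₁ (mem_filter.mp hx).2
    _ ≤ ∑ x : ι → Bool, c ^ #{i ∈ s | x i} :=
        sum_le_sum_of_subset_of_nonneg (filter_subset _ _) fun _ _ _ => pow_nonneg hc₀ _

theorem three_pow_mul_le_exp_mul_two_pow (k : ℕ) :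
    (3 : ℝ) ^ (5 * k) * (4 / 3) ^ (20 * k) ≤ Real.exp (-(10 * (k : ℝ)) / 8) * 2 ^ (20 * k) := by
  have hexp : Real.exp (-(10 * (k : ℝ)) / 8) = Real.exp (-1 / 4) ^ (5 * k) := by
    rw [← Real.exp_nat_mul]; push_cast; ring_nf
  have hlow : (3 / 4 : ℝ) ≤ Real.exp (-1 / 4) := by
    linarith [Real.add_one_le_exp (-1 / 4 : ℝ)]
  calc (3 : ℝ) ^ (5 * k) * (4 / 3) ^ (20 * k) = (3 ^ 5 * (4 / 3) ^ 20) ^ k := by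
        rw [mul_pow, pow_mul, pow_mul]
    _ ≤ ((3 / 4) ^ 5 * 2 ^ 20) ^ k := pow_le_pow_left₀ (by positivity) (by norm_num) k
    _ = (3 / 4) ^ (5 * k) * 2 ^ (20 * k) := by rw [mul_pow, pow_mul, pow_mul]
    _ ≤ Real.exp (-(10 * (k : ℝ)) / 8) * 2 ^ (20 * k) := by
        rw [hexp]; gcongr

theorem card_quarter_lower_tail_le (s : Finset ι) {k : ℕ} (hs : #s = 20 * k) :
    (#{x : ι → Bool | #{i ∈ s | x i} ≤ 5 * k} : ℝ) ≤
      Real.exp (-(10 * (k : ℝ)) / 8) * 2 ^ Fintype.card ι := by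
  have hcount := pow_mul_card_filter_le s (c := (1 / 3 : ℝ)) (by norm_num) (by norm_num) (5 * k)
  rw [hs] at hcount
  calc (#{x : ι → Bool | #{i ∈ s | x i} ≤ 5 * k} : ℝ)
      = 3 ^ (5 * k) * ((1 / 3) ^ (5 * k) * #{x : ι → Bool | #{i ∈ s | x i} ≤ 5 * k}) := by
        rw [← mul_assoc, ← mul_pow]; norm_num
    _ ≤ 3 ^ (5 * k) * ((1 + 1 / 3) ^ (20 * k) * 2 ^ (Fintype.card ι - 20 * k)) :=
        mul_le_mul_of_nonneg_left hcount (by positivity)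
    _ = 3 ^ (5 * k) * (4 / 3) ^ (20 * k) * 2 ^ (Fintype.card ι - 20 * k) := by
        norm_num [mul_assoc]
    _ ≤ Real.exp (-(10 * (k : ℝ)) / 8) * 2 ^ (20 * k) * 2 ^ (Fintype.card ι - 20 * k) :=
        mul_le_mul_of_nonneg_right (three_pow_mul_le_exp_mul_two_pow k) (by positivity)
    _ = Real.exp (-(10 * (k : ℝ)) / 8) * 2 ^ Fintype.card ι := by
        rw [mul_assoc, ← pow_add, Nat.add_sub_cancel' (hs ▸ card_le_univ s)]

end BoolCube

def twoBlockMatrix {m n : ℕ} (H₁ H₂ : Finset (Fin m)) (I₁ I₂ : Finset (Fin n)) :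
    Matrix (Fin m) (Fin n) ℝ :=
  fun j i => if (i ∈ I₁ ∧ j ∈ H₁) ∨ (i ∈ I₂ ∧ j ∈ H₂) then 1 else 0

def twoBlockWeights {m : ℕ} (H₁ H₂ : Finset (Fin m)) : Fin m → ℝ :=
  fun j => if j ∈ H₁ then 1 else if j ∈ H₂ then -1 else 0

theorem netVal_twoBlock {m n : ℕ} {H₁ H₂ : Finset (Fin m)} (hH : Disjoint H₁ H₂)
    (I₁ I₂ : Finset (Fin n)) (x : Fin n → ℝ) :
    netVal (twoBlockMatrix H₁ H₂ I₁ I₂) (twoBlockWeights H₁ H₂) x =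
      #H₁ * relu (∑ i ∈ I₁, x i) - #H₂ * relu (∑ i ∈ I₂, x i) := by
  have hterm (j : Fin m) :
      twoBlockWeights H₁ H₂ j * relu (∑ i, twoBlockMatrix H₁ H₂ I₁ I₂ j i * x i) =
        (if j ∈ H₁ then relu (∑ i ∈ I₁, x i) else 0) -
          (if j ∈ H₂ then relu (∑ i ∈ I₂, x i) else 0) := by
    by_cases hj₁ : j ∈ H₁
    · have hj₂ : j ∉ H₂ := disjoint_left.mp hH hj₁
      simp [twoBlockWeights, twoBlockMatrix, hj₁, hj₂]
    · by_cases hj₂ : j ∈ H₂ <;> simp [twoBlockWeights, twoBlockMatrix, hj₁, hj₂]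
  simp_rw [netVal, hterm, sum_sub_distrib, sum_ite_mem, univ_inter, sum_const, nsmul_eq_mul]

theorem card_mul_lt_of_netVal_twoBlock_pos {m n : ℕ} {H₁ H₂ : Finset (Fin m)}
    (hH : Disjoint H₁ H₂) {I₁ I₂ : Finset (Fin n)} {x : Fin n → Bool}
    (hpos : 0 < netVal (twoBlockMatrix H₁ H₂ I₁ I₂) (twoBlockWeights H₁ H₂) (bv x)) :
    #H₂ * #{i ∈ I₂ | x i} < #H₁ * #I₁ := by
  have hsum (I : Finset (Fin n)) : ∑ i ∈ I, bv x i = #{i ∈ I | x i} := by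
    simp [bv, sum_boole]
  rw [netVal_twoBlock hH, hsum, hsum, relu, relu, max_eq_left (Nat.cast_nonneg _),
    max_eq_left (Nat.cast_nonneg _), sub_pos] at hpos
  calc #H₂ * #{i ∈ I₂ | x i} < #H₁ * #{i ∈ I₁ | x i} := by exact_mod_cast hpos
    _ ≤ #H₁ * #I₁ := Nat.mul_le_mul_left _ (card_filter_le _ _)

def finIco (n a b : ℕ) : Finset (Fin n) := {i | a ≤ (i : ℕ) ∧ (i : ℕ) < b}

theorem card_finIco {n a b : ℕ} (hb : b ≤ n) : #(finIco n a b) = b - a := by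
  rw [← card_map Fin.valEmbedding, ← Nat.card_Ico]
  congr 1
  ext m
  simp only [finIco, mem_map, mem_filter, mem_univ, true_and, Fin.valEmbedding_apply, mem_Ico]
  exact ⟨fun ⟨i, hi, him⟩ => him ▸ hi, fun hm => ⟨⟨m, by omega⟩, hm, rfl⟩⟩

theorem vanilla_hard_instance_rarely_positive_general (n k : ℕ) (ε : ℝ)
    (hε2 : ε < 1 / 1000)
    (hk : (k : ℝ) = Real.sqrt ε * n) :
    let A : Matrix (Fin n) (Fin n) ℝ := fun j i =>
      if ((i : ℕ) < 10 * k ∧ (j : ℕ) < 10 * k) ∨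
          (10 * k ≤ (i : ℕ) ∧ (i : ℕ) < 30 * k ∧ 10 * k ≤ (j : ℕ) ∧ (j : ℕ) < 30 * k)
        then 1 else 0
    let w : Fin n → ℝ := fun j =>
      if (j : ℕ) < 10 * k then 1 else if (j : ℕ) < 30 * k then -1 else 0
    ((Finset.univ.filter (fun x : Fin n → Bool => 0 < netVal A w (bv x))).card : ℝ)
      ≤ Real.exp (-(10 * (k : ℝ)) / 8) * 2 ^ n := by
  intro A w
  have h30 : 30 * k ≤ n := by
    have hsqrt : Real.sqrt ε < 1 / 30 := (Real.sqrt_lt' (by norm_num)).mpr (by norm_num; linarith)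
    have : (30 * k : ℝ) ≤ n := by
      rw [hk, ← mul_assoc]; exact mul_le_of_le_one_left (Nat.cast_nonneg n) (by linarith)
    exact_mod_cast this
  set P := finIco n 0 (10 * k)
  set Q := finIco n (10 * k) (30 * k)
  have hA : A = twoBlockMatrix P Q P Q := by
    ext j i
    simp only [A, twoBlockMatrix, P, Q, finIco, mem_filter, mem_univ, true_and, zero_le, and_assoc]
  have hw : w = twoBlockWeights P Q := by
    ext j; simp only [w, twoBlockWeights, P, Q, finIco, mem_filter, mem_univ, true_and, zero_le]
    split_ifs <;> first | rfl | (exfalso; omega)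
  have hPQ : Disjoint P Q := disjoint_filter.mpr fun i _ hi hi' => by omega
  have hfew (x : Fin n → Bool) (hx : 0 < netVal A w (bv x)) : #{i ∈ Q | x i} ≤ 5 * k := by
    have hlt := card_mul_lt_of_netVal_twoBlock_pos hPQ (hA ▸ hw ▸ hx)
    rw [card_finIco (by omega), card_finIco (by omega), Nat.sub_zero,
      show 30 * k - 10 * k = 20 * k by omega] at hlt
    exact (Nat.lt_of_mul_lt_mul_left (a := 20 * k) (hlt.trans_eq (by ring))).le
  calc _ ≤ (#{x : Fin n → Bool | #{i ∈ Q | x i} ≤ 5 * k} : ℝ) :=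
        Nat.cast_le.mpr (card_le_card (monotone_filter_right _ fun x _ => hfew x))
    _ ≤ _ := by
        simpa using card_quarter_lower_tail_le Q ((card_finIco (by omega)).trans (by omega))

/-- For the hard instance `(A_L, w_L)` (with `k = √ε·n` an integer),
the probability over uniform `x ∈ {0,1}^n` that the output value is positive
is at most `e^{-10·√ε·n/8}`. -/
theorem vanilla_hard_instance_rarely_positive (n k : ℕ) (ε : ℝ)
    (hε1 : 0 < ε) (hε2 : ε < 1 / 1000)
    (hk : (k : ℝ) = Real.sqrt ε * n) :
    let A : Matrix (Fin n) (Fin n) ℝ := fun j i =>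
      if ((i : ℕ) < 10 * k ∧ (j : ℕ) < 10 * k) ∨
          (10 * k ≤ (i : ℕ) ∧ (i : ℕ) < 30 * k ∧ 10 * k ≤ (j : ℕ) ∧ (j : ℕ) < 30 * k)
        then 1 else 0
    let w : Fin n → ℝ := fun j =>
      if (j : ℕ) < 10 * k then 1 else if (j : ℕ) < 30 * k then -1 else 0
    ((Finset.univ.filter (fun x : Fin n → Bool => 0 < netVal A w (bv x))).card : ℝ)
      ≤ Real.exp (-(10 * (k : ℝ)) / 8) * 2 ^ n :=
  vanilla_hard_instance_rarely_positive_general n k ε hε2 hk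
end
end

section
/- Let ℓ ∈ ℕ with ℓ ≥ 1 and let γ ∈ (0, 1/2). Let X_1, …, X_ℓ be independent random variables each uniform on {−1, 1}, and let Y_1, …, Y_ℓ be independent random variables with Pr[Y_i = 1] = 1/2 + γ and Pr[Y_i = −1] = 1/2 − γ. Let X^(ℓ) = relu(Σ_{i=1}^ℓ X_i) and Y^(ℓ) = relu(Σ_{i=1}^ℓ Y_i). Then (1/4)·γ·ℓ ≤ E[Y^(ℓ)] − E[X^(ℓ)] ≤ 4·γ·ℓ. -/
/-!
`(walkStep p ^ n) f x` is the expectation of `f (x + S)`, where `S` is a sum of `n` independent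
signs with `P(+1) = p`. Write `Q = walkStep (1/2 + γ)`, `P = walkStep (1/2)` and
`Δ f = f (· + 1) - f (· - 1)`. Then `Q - P = γ • Δ` and
`Q ^ (n + 1) - P ^ (n + 1) = Q ^ n * (Q - P) + (Q ^ n - P ^ n) * P`, so the gap is `γ` times a sum
of `ℓ` values `(Q ^ m) (P ^ k (Δ relu)) 0`. Now `g = Δ relu` is monotone, bounded by `2`, and
satisfies `g x + g (-x) = 2`, and `P` preserves these properties since it commutes with `Δ` and
with `x ↦ -x`. For such `g` each value lies in `[1, 2]`: the expectation of a monotone function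
grows with the bias, so `(Q ^ m) g 0 ≥ (walkStep (1/2 - γ) ^ m) g 0 = (Q ^ m) (2 - g) 0`.
Hence `γ ℓ ≤ E[Y] - E[X] ≤ 2 γ ℓ`.
-/

open scoped Classical
open Finset

noncomputable section

/-- The sign value `±1` of a Boolean. -/
def sgn (b : Bool) : ℝ := if b then 1 else -1

namespace SignWalk

def walkStep (p : ℝ) : Module.End ℝ (ℝ → ℝ) :=
  p • LinearMap.funLeft ℝ ℝ (· + 1) + (1 - p) • LinearMap.funLeft ℝ ℝ (· - 1)

def centralDiff : Module.End ℝ (ℝ → ℝ) :=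
  LinearMap.funLeft ℝ ℝ (· + 1) - LinearMap.funLeft ℝ ℝ (· - 1)

def reflect : Module.End ℝ (ℝ → ℝ) := LinearMap.funLeft ℝ ℝ Neg.neg

@[simp] lemma walkStep_apply (p : ℝ) (f : ℝ → ℝ) (x : ℝ) :
    walkStep p f x = p * f (x + 1) + (1 - p) * f (x - 1) := rfl

@[simp] lemma centralDiff_apply (f : ℝ → ℝ) (x : ℝ) :
    centralDiff f x = f (x + 1) - f (x - 1) := rfl

@[simp] lemma reflect_apply (f : ℝ → ℝ) (x : ℝ) : reflect f x = f (-x) := rfl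

lemma walkStep_pow_apply_eq_sum (p : ℝ) (n : ℕ) (f : ℝ → ℝ) (x : ℝ) :
    (walkStep p ^ n) f x =
      ∑ σ : Fin n → Bool, (∏ i, if σ i then p else 1 - p) * f (x + ∑ i, sgn (σ i)) := by
  induction n generalizing x with
  | zero => simp
  | succ n ih =>
    rw [pow_succ', Module.End.mul_apply, walkStep_apply, ih, ih, Finset.mul_sum, Finset.mul_sum,
      ← (Fin.consEquiv fun _ => Bool).sum_comp, Fintype.sum_prod_type, Fintype.sum_bool]
    congr 1 <;> refine Finset.sum_congr rfl fun τ _ => ?_ <;>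
      simp [Fin.prod_univ_succ, Fin.sum_univ_succ, sgn, mul_assoc, add_assoc, sub_eq_add_neg]

lemma walkStep_mono {p : ℝ} (hp0 : 0 ≤ p) (hp1 : p ≤ 1) : Monotone (walkStep p) := by
  intro f g hfg x
  simp only [walkStep_apply]
  exact add_le_add (mul_le_mul_of_nonneg_left (hfg _) hp0)
    (mul_le_mul_of_nonneg_left (hfg _) (sub_nonneg.2 hp1))

lemma walkStep_pow_mono {p : ℝ} (hp0 : 0 ≤ p) (hp1 : p ≤ 1) (n : ℕ) :
    Monotone (walkStep p ^ n) := by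
  rw [Module.End.coe_pow]
  exact (walkStep_mono hp0 hp1).iterate n

lemma monotone_walkStep {p : ℝ} (hp0 : 0 ≤ p) (hp1 : p ≤ 1) {f : ℝ → ℝ}
    (hf : Monotone f) :
    Monotone (walkStep p f) := by
  intro x y hxy
  simp only [walkStep_apply]
  exact add_le_add (mul_le_mul_of_nonneg_left (hf (by linarith)) hp0)
    (mul_le_mul_of_nonneg_left (hf (by linarith)) (sub_nonneg.2 hp1))

lemma walkStep_const (p c : ℝ) : walkStep p (fun _ => c) = fun _ => c := by
  ext; simp only [walkStep_apply]; ring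

lemma walkStep_pow_const (p c : ℝ) (n : ℕ) : (walkStep p ^ n) (fun _ => c) = fun _ => c := by
  rw [Module.End.coe_pow]
  exact Function.iterate_fixed (walkStep_const p c) n

lemma walkStep_sub_walkStep (p p' : ℝ) : walkStep p' - walkStep p = (p' - p) • centralDiff := by
  ext f x
  simp only [LinearMap.sub_apply, LinearMap.smul_apply, Pi.sub_apply, Pi.smul_apply,
    walkStep_apply, centralDiff_apply, smul_eq_mul]
  ring

lemma centralDiff_walkStep (p : ℝ) (f : ℝ → ℝ) :
    centralDiff (walkStep p f) = walkStep p (centralDiff f) := by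
  ext x
  simp only [walkStep_apply, centralDiff_apply, add_sub_cancel_right, sub_add_cancel]
  ring

lemma walkStep_comp_reflect (p : ℝ) : walkStep p * reflect = reflect * walkStep (1 - p) := by
  ext f x
  simp only [Module.End.mul_apply, walkStep_apply, reflect_apply, neg_add', neg_sub',
    sub_neg_eq_add]
  ring

lemma walkStep_le_walkStep {p p' : ℝ} (hpp' : p ≤ p') {f : ℝ → ℝ} (hf : Monotone f) :
    walkStep p f ≤ walkStep p' f := by
  intro x
  have hstep : f (x - 1) ≤ f (x + 1) := hf (by linarith)
  simp only [walkStep_apply]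
  nlinarith [mul_nonneg (sub_nonneg.2 hpp') (sub_nonneg.2 hstep)]

lemma walkStep_pow_le_walkStep_pow {p p' : ℝ} (hp0 : 0 ≤ p) (hpp' : p ≤ p') (hp'1 : p' ≤ 1)
    (n : ℕ) {f : ℝ → ℝ} (hf : Monotone f) : (walkStep p ^ n) f ≤ (walkStep p' ^ n) f := by
  induction n generalizing f with
  | zero => rfl
  | succ n ih =>
    rw [pow_succ, pow_succ, Module.End.mul_apply, Module.End.mul_apply]
    exact ((walkStep_pow_mono hp0 (hpp'.trans hp'1) n) (walkStep_le_walkStep hpp' hf)).trans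
      (ih (monotone_walkStep (hp0.trans hpp') hp'1 hf))

lemma one_le_walkStep_pow_apply_zero {q : ℝ} (hq : 1 / 2 ≤ q) (hq1 : q ≤ 1) (n : ℕ)
    {g : ℝ → ℝ} (hg : Monotone g) (hsymm : g + reflect g = fun _ => 2) :
    1 ≤ (walkStep q ^ n) g 0 := by
  have hle : (walkStep (1 - q) ^ n) g 0 ≤ (walkStep q ^ n) g 0 :=
    walkStep_pow_le_walkStep_pow (by linarith) (by linarith) hq1 n hg 0
  have hreflect : (walkStep (1 - q) ^ n) g 0 = 2 - (walkStep q ^ n) g 0 :=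
    calc (walkStep (1 - q) ^ n) g 0
      _ = (reflect * walkStep (1 - q) ^ n) g 0 := by simp
      _ = (walkStep q ^ n) (reflect g) 0 := by
        have hsemi : SemiconjBy reflect (walkStep (1 - q)) (walkStep q) :=
          (walkStep_comp_reflect q).symm
        rw [(hsemi.pow_right n).eq]; rfl
      _ = (walkStep q ^ n) ((fun _ => 2) - g) 0 := by rw [← hsymm, add_sub_cancel_left]
      _ = 2 - (walkStep q ^ n) g 0 := by rw [map_sub, walkStep_pow_const]; rfl
  linarith

lemma walkStep_half_add_reflect {g : ℝ → ℝ} {c : ℝ} (hsymm : g + reflect g = fun _ => c) :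
    walkStep (1 / 2) g + reflect (walkStep (1 / 2) g) = fun _ => c := by
  have hcomm : reflect * walkStep (1 / 2) = walkStep (1 / 2) * reflect := by
    rw [walkStep_comp_reflect]; norm_num
  rw [← Module.End.mul_apply, hcomm, Module.End.mul_apply, ← map_add, hsymm, walkStep_const]

lemma walkStep_pow_succ_sub_apply (p p' : ℝ) (n : ℕ) (f : ℝ → ℝ) (x : ℝ) :
    (walkStep p' ^ (n + 1)) f x - (walkStep p ^ (n + 1)) f x =
      (p' - p) * (walkStep p' ^ n) (centralDiff f) x +
        ((walkStep p' ^ n) (walkStep p f) x - (walkStep p ^ n) (walkStep p f) x) := by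
  have hf : walkStep p' f = walkStep p f + (p' - p) • centralDiff f := by
    rw [← LinearMap.smul_apply, ← walkStep_sub_walkStep, LinearMap.sub_apply, add_sub_cancel]
  rw [pow_succ, pow_succ, Module.End.mul_apply, Module.End.mul_apply, hf, map_add, map_smul]
  simp only [Pi.add_apply, Pi.smul_apply, smul_eq_mul]
  ring

section

variable {γ : ℝ} (hγ0 : 0 ≤ γ) (hγ1 : γ ≤ 1 / 2)
include hγ0 hγ1

lemma mul_le_walkStep_pow_sub_walkStep_pow_apply_zero (n : ℕ) {f : ℝ → ℝ}
    (hmono : Monotone (centralDiff f))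
    (hsymm : centralDiff f + reflect (centralDiff f) = fun _ => 2) :
    γ * n ≤ (walkStep (1 / 2 + γ) ^ n) f 0 - (walkStep (1 / 2) ^ n) f 0 := by
  induction n generalizing f with
  | zero => simp
  | succ n ih =>
    have hone : 1 ≤ (walkStep (1 / 2 + γ) ^ n) (centralDiff f) 0 :=
      one_le_walkStep_pow_apply_zero (by linarith) (by linarith) n hmono hsymm
    have hrest := ih (f := walkStep (1 / 2) f)
      (by rw [centralDiff_walkStep]; exact monotone_walkStep (by norm_num) (by norm_num) hmono)
      (by rw [centralDiff_walkStep]; exact walkStep_half_add_reflect hsymm)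
    have hγone := mul_le_mul_of_nonneg_left hone hγ0
    rw [walkStep_pow_succ_sub_apply, add_sub_cancel_left]
    push_cast
    linarith

lemma walkStep_pow_sub_walkStep_pow_apply_le (n : ℕ) {f : ℝ → ℝ}
    (hle : centralDiff f ≤ fun _ => 2) (x : ℝ) :
    (walkStep (1 / 2 + γ) ^ n) f x - (walkStep (1 / 2) ^ n) f x ≤ 2 * γ * n := by
  induction n generalizing f with
  | zero => simp
  | succ n ih =>
    have htwo : (walkStep (1 / 2 + γ) ^ n) (centralDiff f) x ≤ 2 := by
      simpa only [walkStep_pow_const] using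
        walkStep_pow_mono (by linarith) (by linarith) n hle x
    have hrest := ih (f := walkStep (1 / 2) f) (by
      rw [centralDiff_walkStep, ← walkStep_const (1 / 2) 2]
      exact walkStep_mono (by norm_num) (by norm_num) hle)
    have hγtwo := mul_le_mul_of_nonneg_left htwo hγ0
    rw [walkStep_pow_succ_sub_apply, add_sub_cancel_left]
    push_cast
    linarith

end

lemma monotone_centralDiff_relu : Monotone (centralDiff relu) := by
  intro x y hxy
  simp only [centralDiff_apply, relu, max_def]
  split_ifs <;> linarith

lemma centralDiff_relu_add_reflect :
    centralDiff relu + reflect (centralDiff relu) = fun _ => 2 := by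
  ext x
  simp only [Pi.add_apply, reflect_apply, centralDiff_apply, relu, max_def]
  split_ifs <;> linarith

lemma centralDiff_relu_le : centralDiff relu ≤ fun _ => 2 := by
  intro x
  simp only [centralDiff_apply, relu, max_def]
  split_ifs <;> linarith

end SignWalk

open SignWalk

theorem relu_sum_expectation_gap_general (ℓ : ℕ) (γ : ℝ) (hγ1 : 0 < γ) (hγ2 : γ < 1 / 2) :
    let EX : ℝ := (1 / 2 ^ ℓ) * ∑ σ : Fin ℓ → Bool, relu (∑ i, sgn (σ i))
    let EY : ℝ := ∑ σ : Fin ℓ → Bool,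
      (∏ i, if σ i then 1 / 2 + γ else 1 / 2 - γ) * relu (∑ i, sgn (σ i))
    (1 / 4) * γ * ℓ ≤ EY - EX ∧ EY - EX ≤ 4 * γ * ℓ := by
  intro EX EY
  have hEX : EX = (walkStep (1 / 2) ^ ℓ) relu 0 := by
    simp only [EX, walkStep_pow_apply_eq_sum, zero_add, show (1 : ℝ) - 1 / 2 = 1 / 2 by norm_num,
      ite_self, prod_const, card_univ, Fintype.card_fin, one_div_pow, mul_sum]
  have hEY : EY = (walkStep (1 / 2 + γ) ^ ℓ) relu 0 := by
    simp only [EY, walkStep_pow_apply_eq_sum, zero_add, show 1 - (1 / 2 + γ) = 1 / 2 - γ by ring]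
  have hlow := mul_le_walkStep_pow_sub_walkStep_pow_apply_zero hγ1.le hγ2.le ℓ
    monotone_centralDiff_relu centralDiff_relu_add_reflect
  have hup := walkStep_pow_sub_walkStep_pow_apply_le hγ1.le hγ2.le ℓ centralDiff_relu_le 0
  have hγℓ : 0 ≤ γ * ℓ := by positivity
  rw [hEX, hEY]
  constructor <;> linarith

/-- Difference of expectations of ReLU of sums of `ℓ` i.i.d. `±1` variables,
unbiased versus `γ`-biased: `(1/4)·γ·ℓ ≤ E[Y^(ℓ)] − E[X^(ℓ)] ≤ 4·γ·ℓ`. Expectations are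
written explicitly as weighted sums over `{−1,1}^ℓ`. -/
theorem relu_sum_expectation_gap (ℓ : ℕ) (hℓ : 1 ≤ ℓ) (γ : ℝ) (hγ1 : 0 < γ) (hγ2 : γ < 1 / 2) :
    let EX : ℝ := (1 / 2 ^ ℓ) * ∑ σ : Fin ℓ → Bool, relu (∑ i, sgn (σ i))
    let EY : ℝ := ∑ σ : Fin ℓ → Bool,
      (∏ i, if σ i then 1 / 2 + γ else 1 / 2 - γ) * relu (∑ i, sgn (σ i))
    (1 / 4) * γ * ℓ ≤ EY - EX ∧ EY - EX ≤ 4 * γ * ℓ :=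
  relu_sum_expectation_gap_general ℓ γ hγ1 hγ2
end
end

section
/- Let k ≥ 2 be even. Let X_1, …, X_k be random variables such that X_1, …, X_{k−1} are independent and uniform on {−1, 1}, and X_k = 1 if the number of indices i ∈ {1, …, k−1} with X_i = 1 is odd and X_k = −1 otherwise. Let U_1, …, U_k be independent random variables each uniform on {−1, 1}. Then E[relu(Σ_{i=1}^k X_i)] − E[relu(Σ_{i=1}^k U_i)] = ((−1)^{k/2 − 1} / 2^{k−1}) · C(k−2, k/2 − 1), where C(·,·) denotes the binomial coefficient. -/
/-!
Appending to `X_1, …, X_{k-1}` the bit that makes the number of `+1`s even, `(X_1, …, X_k)` is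
uniform on the sign vectors of even weight, so `E[relu ΣX] - E[relu ΣU]` is
`2^{-k} Σ_τ (-1)^{#τ} relu(Σ τ) = 2^{1-k} Σ_j (-1)^j C(k, j) relu(j - k/2)`.
Write `relu x = x + relu (-x)`: the alternating binomial sums kill the linear part, and what
is left, `Σ_{j ≤ k/2} (-1)^j C(k, j) (k/2 - j) = Σ_{r < k/2} Σ_{j ≤ r} (-1)^j C(k, j)`, is
evaluated by applying `Σ_{j ≤ r} (-1)^j C(N, j) = (-1)^r C(N - 1, r)` twice.
-/

open scoped Classical
open Finset

noncomputable section

lemma relu_eq_self_add_relu_neg (x : ℝ) : relu x = x + relu (-x) := by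
  unfold relu
  linarith [max_zero_sub_max_neg_zero_eq_self x]

lemma relu_of_nonpos {x : ℝ} (h : x ≤ 0) : relu x = 0 := max_eq_right h

lemma relu_of_nonneg {x : ℝ} (h : 0 ≤ x) : relu x = x := max_eq_left h

lemma relu_two_mul (x : ℝ) : relu (2 * x) = 2 * relu x := by
  simp only [relu, mul_max_of_nonneg x 0 (zero_le_two : (0 : ℝ) ≤ 2), mul_zero]

lemma sum_range_mul_sub_eq_sum_range_sum_range {R : Type*} [CommRing R] (a : ℕ → R) (M : ℕ) :
    ∑ j ∈ range M, a j * (M - j : R) = ∑ r ∈ range M, ∑ j ∈ range (r + 1), a j := by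
  induction M with
  | zero => simp
  | succ M ih =>
    rw [sum_range_succ (fun r => ∑ j ∈ range (r + 1), a j), ← ih, sum_range_succ a M,
      sum_range_succ]
    push_cast
    simp only [mul_sub, mul_add, mul_one, sum_add_distrib, sum_sub_distrib]
    ring

lemma alternating_sum_range_choose_eq_choose {R : Type*} [Ring R] (n m : ℕ) :
    ∑ j ∈ range (m + 1), (-1 : R) ^ j * (n + 1).choose j = (-1) ^ m * n.choose m := by
  simpa using congrArg (Int.cast : ℤ → R) (Int.alternating_sum_range_choose_eq_choose (n := n))

lemma alternating_sum_range_choose_of_ne {R : Type*} [Ring R] {n : ℕ} (hn : n ≠ 0) :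
    ∑ j ∈ range (n + 1), (-1 : R) ^ j * n.choose j = 0 := by
  simpa using congrArg (Int.cast : ℤ → R) (Int.alternating_sum_range_choose_of_ne hn)

lemma alternating_sum_range_choose_mul_self {R : Type*} [CommRing R] (n : ℕ) :
    ∑ j ∈ range (n + 3), (-1 : R) ^ j * (n + 2).choose j * j = 0 := by
  have hchoose (i : ℕ) :
      ((n + 2).choose (i + 1) : R) * (i + 1 : ℕ) = (n + 2) * (n + 1).choose i := by
    simpa [add_assoc, one_add_one_eq_two] using
      congrArg (Nat.cast : ℕ → R) (Nat.add_one_mul_choose_eq (n + 1) i).symm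
  calc ∑ j ∈ range (n + 3), (-1 : R) ^ j * (n + 2).choose j * j
      = -(n + 2) * ∑ i ∈ range (n + 2), (-1 : R) ^ i * (n + 1).choose i := by
        rw [sum_range_succ', mul_sum]
        simp only [Nat.cast_zero, mul_zero, add_zero, mul_assoc, hchoose]
        exact sum_congr rfl fun i _ => by ring
    _ = 0 := by rw [alternating_sum_range_choose_of_ne (Nat.succ_ne_zero n), mul_zero]

lemma alternating_sum_range_choose_mul_relu_sub (n m : ℕ) :
    ∑ j ∈ range (n + 3), (-1 : ℝ) ^ j * (n + 2).choose j * relu (j - (m + 1)) =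
      (-1) ^ m * n.choose m := by
  set a : ℕ → ℝ := fun j => (-1) ^ j * (n + 2).choose j with ha
  have hpos : ∑ j ∈ range (n + 3), a j * (j - (m + 1)) = 0 := by
    simp only [ha, mul_sub, sum_sub_distrib, ← sum_mul, alternating_sum_range_choose_mul_self]
    rw [alternating_sum_range_choose_of_ne (by omega : n + 2 ≠ 0)]
    ring
  have hneg : ∑ j ∈ range (n + 3), a j * relu (m + 1 - j) =
      ∑ j ∈ range (m + 1), a j * ((m + 1 : ℕ) - j : ℝ) := by
    have hchoose_zero : ∀ j ∈ range (n + 3) ∪ range (m + 1), j ∉ range (n + 3) →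
        a j * relu (m + 1 - j) = 0 := fun j _ hj => by
      have : n + 2 < j := by rw [mem_range] at hj; omega
      simp [ha, Nat.choose_eq_zero_of_lt this]
    have hrelu_zero : ∀ j ∈ range (n + 3) ∪ range (m + 1), j ∉ range (m + 1) →
        a j * relu (m + 1 - j) = 0 := fun j _ hj => by
      have : (m + 1 : ℝ) ≤ j := by rw [mem_range] at hj; exact_mod_cast not_lt.mp hj
      rw [relu_of_nonpos (by linarith), mul_zero]
    rw [sum_subset subset_union_left hchoose_zero, ← sum_subset subset_union_right hrelu_zero]
    refine sum_congr rfl fun j hj => ?_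
    have : (j : ℝ) ≤ m + 1 := by exact_mod_cast (mem_range.mp hj).le
    rw [relu_of_nonneg (by linarith)]
    push_cast
    ring
  calc ∑ j ∈ range (n + 3), a j * relu (j - (m + 1))
      = ∑ j ∈ range (n + 3), a j * (j - (m + 1)) +
          ∑ j ∈ range (n + 3), a j * relu (m + 1 - j) := by
        rw [← sum_add_distrib]
        exact sum_congr rfl fun j _ => by rw [relu_eq_self_add_relu_neg, neg_sub, mul_add]
    _ = ∑ r ∈ range (m + 1), ∑ j ∈ range (r + 1), a j := by
        rw [hpos, hneg, zero_add, sum_range_mul_sub_eq_sum_range_sum_range]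
    _ = (-1) ^ m * n.choose m := by
        simp only [ha, alternating_sum_range_choose_eq_choose]

lemma sum_sgn_eq {n : ℕ} (τ : Fin n → Bool) :
    ∑ i, sgn (τ i) = 2 * #{i | τ i = true} - n := by
  have h (b : Bool) : sgn b = 2 * (if b = true then 1 else 0) - 1 := by
    cases b <;> norm_num [sgn]
  simp only [h, sum_sub_distrib, ← mul_sum, sum_boole, sum_const, card_univ, Fintype.card_fin,
    nsmul_eq_mul, mul_one]

lemma sum_fun_bool_eq_sum_choose {α M : Type*} [Fintype α] [DecidableEq α] [AddCommMonoid M]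
    (G : ℕ → M) :
    ∑ τ : α → Bool, G #{a | τ a = true} =
      ∑ j ∈ range (Fintype.card α + 1), (Fintype.card α).choose j • G j := by
  have hbij : Function.Bijective fun τ : α → Bool => ({a | τ a = true} : Finset α) := by
    refine ⟨fun τ₁ τ₂ h => funext fun a => Bool.eq_iff_iff.mpr ?_, fun s => ⟨(· ∈ s), by simp⟩⟩
    simpa using Finset.ext_iff.mp h a
  rw [hbij.sum_comp (fun s => G #s), ← powerset_univ, sum_powerset_apply_card, card_univ]

lemma card_filter_fin_cons {n : ℕ} (b : Bool) (σ : Fin n → Bool) :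
    #{i | (Fin.cons b σ : Fin (n + 1) → Bool) i = true} =
      (if b then 1 else 0) + #{i | σ i = true} := by
  rw [Fin.card_filter_univ_succ']
  simp

-- `1 + (-1) ^ c` is twice the indicator of `c` being even, and prepending the parity bit maps
-- `Fin n → Bool` bijectively onto the tuples with an even number of `true`s.
lemma two_mul_sum_fin_cons_parity {R : Type*} [CommRing R] {n : ℕ}
    (F : (Fin (n + 1) → Bool) → R) :
    2 * ∑ σ : Fin n → Bool, F (Fin.cons (decide (Odd #{i | σ i = true})) σ) =
      ∑ τ : Fin (n + 1) → Bool, F τ * (1 + (-1) ^ #{i | τ i = true}) := by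
  rw [← Fintype.sum_equiv (Fin.consEquiv fun _ => Bool)
    (fun p => F (Fin.cons p.1 p.2) *
      (1 + (-1) ^ #{i | (Fin.cons p.1 p.2 : Fin (n + 1) → Bool) i}))
    _ fun _ => rfl, Fintype.sum_prod_type_right, mul_sum]
  refine sum_congr rfl fun σ _ => ?_
  simp only [Fintype.sum_bool, card_filter_fin_cons, if_true, Bool.false_eq_true, if_false,
    pow_add, pow_one]
  rcases Nat.even_or_odd #{i | σ i = true} with h | h
  · rw [h.neg_one_pow, decide_eq_false (Nat.not_odd_iff_even.mpr h)]
    ring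
  · rw [h.neg_one_pow, decide_eq_true h]
    ring

lemma two_mul_sum_relu_parity_completed (n : ℕ) :
    2 * ∑ σ : Fin n → Bool,
        relu ((∑ i, sgn (σ i)) + (if Odd #{i | σ i = true} then 1 else -1)) =
      ∑ τ : Fin (n + 1) → Bool, relu (∑ i, sgn (τ i)) * (1 + (-1) ^ #{i | τ i = true}) := by
  rw [← two_mul_sum_fin_cons_parity]
  congr 2 with σ
  rw [Fin.sum_univ_succ, add_comm]
  simp [sgn]

lemma sum_relu_sum_sgn_mul_neg_one_pow (m : ℕ) :
    ∑ τ : Fin (2 * m + 2) → Bool, relu (∑ i, sgn (τ i)) * (-1) ^ #{i | τ i = true} =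
      2 * ((-1) ^ m * (2 * m).choose m) := by
  simp only [sum_sgn_eq]
  rw [sum_fun_bool_eq_sum_choose (fun j => relu (2 * j - (2 * m + 2 : ℕ)) * (-1) ^ j),
    Fintype.card_fin, ← alternating_sum_range_choose_mul_relu_sub, mul_sum]
  refine sum_congr rfl fun j _ => ?_
  rw [nsmul_eq_mul, show (2 * j - (2 * m + 2 : ℕ) : ℝ) = 2 * (j - (m + 1)) by push_cast; ring,
    relu_two_mul]
  ring

/-- Let `k ≥ 2` be even, let `X_1,…,X_{k−1}` be i.i.d. uniform `±1` and let
`X_k = 1` iff the number of `+1`s among `X_1,…,X_{k−1}` is odd (else `−1`); let `U_1,…,U_k`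
be i.i.d. uniform `±1`. Then
`E[relu(ΣX_i)] − E[relu(ΣU_i)] = ((−1)^{k/2−1}/2^{k−1})·C(k−2, k/2−1)`. -/
theorem parity_relu_expectation (k : ℕ) (hk : 2 ≤ k) (hke : Even k) :
    let EX : ℝ := (1 / 2 ^ (k - 1)) * ∑ σ : Fin (k - 1) → Bool,
      relu ((∑ i, sgn (σ i)) +
        (if Odd (Finset.univ.filter (fun i => σ i = true)).card then 1 else -1))
    let EU : ℝ := (1 / 2 ^ k) * ∑ τ : Fin k → Bool, relu (∑ i, sgn (τ i))
    EX - EU = ((-1 : ℝ) ^ (k / 2 - 1) / 2 ^ (k - 1)) * (Nat.choose (k - 2) (k / 2 - 1)) := by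
  obtain ⟨m, rfl⟩ : ∃ m, k = 2 * m + 2 := by
    obtain ⟨r, hr⟩ := hke
    exact ⟨r - 1, by omega⟩
  have hparity := two_mul_sum_relu_parity_completed (2 * m + 1)
  simp only [mul_add, mul_one, sum_add_distrib, sum_relu_sum_sgn_mul_neg_one_pow] at hparity
  rw [show (2 * m + 2) / 2 - 1 = m by omega, show 2 * m + 2 - 2 = 2 * m by omega,
    show 2 * m + 2 - 1 = 2 * m + 1 by omega]
  linear_combination (1 / 2 ^ (2 * m + 2) : ℝ) * hparity
end
end

section
/- Let A ∈ [−1,1]^{m×n} and w ∈ [−1,1]^m be arbitrary. Then for any choice of at most m/4 entries from A and w (i.e., any set consisting of at most m/4 positions, each position being either an entry of A or an entry of w), there exist A' ∈ [−1,1]^{m×n} and w' ∈ [−1,1]^m that agree with A and w respectively on all chosen positions, such that the ReLU network (A', w') computes the constant 0-function, i.e., w'ᵀ·relu(A'x) ≤ 0 for all x ∈ {0,1}^n. -/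
/-!
The chosen positions lie in at most `m/4` hidden neurons; call this set `B`. As `|B| ≤ m - |B|`,
some permutation `σ` moves `B` into its complement. Keep the neurons of `B`, turn neuron `σ j` into
a copy of neuron `j ∈ B` with output weight `-w j`, and give every other neuron output weight `0`:
on every input the copies cancel the contribution of `B`, so the network outputs exactly `0`.
-/

open scoped Classical
open Finset

noncomputable section

theorem Finset.exists_perm_forall_mem_notMem {α : Type*} [Fintype α] (B : Finset α)
    (hB : 2 * #B ≤ Fintype.card α) : ∃ σ : Equiv.Perm α, ∀ j ∈ B, σ j ∉ B := by
  obtain ⟨C, hCB, hC⟩ := Bᶜ.exists_subset_card_eq (n := #B) (by rw [card_compl]; omega)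
  let e : {j // j ∈ B} ≃ {j // j ∈ C} := Finset.equivOfCardEq hC.symm
  exact ⟨e.extendSubtype, fun j hj => mem_compl.1 (hCB (e.extendSubtype_mem j hj))⟩

namespace ReluNet

variable {m n : ℕ} (B : Finset (Fin m)) (σ : Equiv.Perm (Fin m))

def mirrorRows (A : Matrix (Fin m) (Fin n) ℝ) : Matrix (Fin m) (Fin n) ℝ :=
  fun k => if σ.symm k ∈ B then A (σ.symm k) else A k

def mirrorOut (w : Fin m → ℝ) : Fin m → ℝ :=
  fun k => if k ∈ B then w k else if σ.symm k ∈ B then -w (σ.symm k) else 0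

variable {B σ}

theorem abs_mirrorRows_le {A : Matrix (Fin m) (Fin n) ℝ} (hA : ∀ j i, |A j i| ≤ 1) (k : Fin m)
    (i : Fin n) : |mirrorRows B σ A k i| ≤ 1 := by
  unfold mirrorRows
  split_ifs <;> exact hA _ i

theorem abs_mirrorOut_le {w : Fin m → ℝ} (hw : ∀ j, |w j| ≤ 1) (k : Fin m) :
    |mirrorOut B σ w k| ≤ 1 := by
  unfold mirrorOut
  split_ifs <;> simp [hw]

theorem symm_apply_notMem (hσ : ∀ j ∈ B, σ j ∉ B) {k : Fin m} (hk : k ∈ B) : σ.symm k ∉ B :=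
  fun h => hσ _ h (by simpa using hk)

theorem mirrorRows_of_mem (hσ : ∀ j ∈ B, σ j ∉ B) (A : Matrix (Fin m) (Fin n) ℝ) {k : Fin m}
    (hk : k ∈ B) : mirrorRows B σ A k = A k :=
  if_neg (symm_apply_notMem hσ hk)

theorem mirrorOut_of_mem (w : Fin m → ℝ) {k : Fin m} (hk : k ∈ B) : mirrorOut B σ w k = w k :=
  if_pos hk

theorem netVal_mirror_eq_zero (hσ : ∀ j ∈ B, σ j ∉ B) (A : Matrix (Fin m) (Fin n) ℝ)
    (w : Fin m → ℝ) (x : Fin n → ℝ) : netVal (mirrorRows B σ A) (mirrorOut B σ w) x = 0 := by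
  set G : Fin m → ℝ := fun j => if j ∈ B then w j * relu (∑ i, A j i * x i) else 0
  have hneuron : ∀ k, mirrorOut B σ w k * relu (∑ i, mirrorRows B σ A k i * x i)
      = G k - G (σ.symm k) := by
    intro k
    by_cases hk : k ∈ B
    · simp [G, mirrorOut, mirrorRows, hk, symm_apply_notMem hσ hk]
    · by_cases hk' : σ.symm k ∈ B <;> simp [G, mirrorOut, mirrorRows, hk, hk']
  simp only [netVal, hneuron, sum_sub_distrib, Equiv.sum_comp, sub_self]

end ReluNet

open ReluNet in
/-- For any `A ∈ [−1,1]^{m×n}`, `w ∈ [−1,1]^m`, and any set `P` of at most `m/4`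
positions (each position either an entry of `A` or an entry of `w`), there exist `A', w'` with
entries in `[−1,1]` agreeing with `A, w` on all positions in `P` such that `(A', w')` computes
the constant 0-function, i.e. `w'ᵀ·relu(A'x) ≤ 0` for all `x ∈ {0,1}^n`. -/
theorem complete_to_zero_function (m n : ℕ)
    (A : Matrix (Fin m) (Fin n) ℝ) (w : Fin m → ℝ)
    (hA : ∀ j i, |A j i| ≤ 1) (hw : ∀ j, |w j| ≤ 1)
    (P : Finset ((Fin m × Fin n) ⊕ Fin m)) (hP : (P.card : ℝ) ≤ (m : ℝ) / 4) :
    ∃ (A' : Matrix (Fin m) (Fin n) ℝ) (w' : Fin m → ℝ),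
      (∀ j i, |A' j i| ≤ 1) ∧ (∀ j, |w' j| ≤ 1) ∧
      (∀ p : Fin m × Fin n, Sum.inl p ∈ P → A' p.1 p.2 = A p.1 p.2) ∧
      (∀ j : Fin m, Sum.inr j ∈ P → w' j = w j) ∧
      (∀ x : Fin n → Bool, netVal A' w' (bv x) ≤ 0) := by
  set B : Finset (Fin m) := P.image (Sum.elim Prod.fst id)
  have hB : 2 * #B ≤ Fintype.card (Fin m) := by
    have : (#B : ℝ) ≤ m / 4 := le_trans (by exact_mod_cast card_image_le) hP
    rw [Fintype.card_fin]
    exact_mod_cast (by linarith : (2 * #B : ℝ) ≤ m)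
  obtain ⟨σ, hσ⟩ := B.exists_perm_forall_mem_notMem hB
  refine ⟨mirrorRows B σ A, mirrorOut B σ w, abs_mirrorRows_le hA, abs_mirrorOut_le hw,
    fun p hp => congrFun (mirrorRows_of_mem hσ A (mem_image_of_mem _ hp : p.1 ∈ B)) p.2,
    fun j hj => mirrorOut_of_mem w (mem_image_of_mem _ hj),
    fun x => (netVal_mirror_eq_zero hσ A w (bv x)).le⟩
end
end
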